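/- arXiv:1010.6184 — 5 statements merged into one kernel-verified Lean document; each statement's English description precedes it below -/
import Mathlib

section
/- Let p ∈ (1,∞), let μ and ν be Radon measures on ℝ^N, and let K be a singular kernel (with respect to μ and ν) that is restrictedly L^p bounded with bound C. Let ρ ∈ L¹(ℝ^N) (with respect to Lebesgue measure), set M(x) = 1 − ρ̂(x), and for ε > 0 set M_ε(x) = M(x/ε). Then for every ε > 0 the kernel K_ε(s,t) := K(s,t) M_ε(t−s) is restrictedly L^p bounded with bound (1 + ‖ρ‖_{L¹}) C. -/
open MeasureTheory Filter Metric Complex Topology ENNReal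

noncomputable section

abbrev Euc (N : ℕ) : Type := EuclideanSpace ℝ (Fin N)

/-- Fourier transform `ρ̂(s) = ∫ ρ(x) e^{-i s·x} dx`. -/
def ft {N : ℕ} (ρ : Euc N → ℂ) (s : Euc N) : ℂ :=
  ∫ x : Euc N, ρ x * Complex.exp (-(Complex.I * ((inner ℝ s x : ℝ) : ℂ)))

/-- bounded Borel compactly supported -/
def GoodFun {N : ℕ} (f : Euc N → ℂ) : Prop :=
  Measurable f ∧ (∃ Cf : ℝ, ∀ x, ‖f x‖ ≤ Cf) ∧ HasCompactSupport f

/-- supports are separated -/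
def Separated {N : ℕ} (f g : Euc N → ℂ) : Prop :=
  ∃ a > 0, ∀ x ∈ Function.support f, ∀ y ∈ Function.support g, a ≤ dist x y

/-- restrictedly L^p bounded with bound C -/
def RestrBdd {N : ℕ} (μ ν : Measure (Euc N)) (K : Euc N → Euc N → ℂ)
    (p p' C : ℝ) : Prop :=
  ∀ f g : Euc N → ℂ, GoodFun f → GoodFun g → Separated f g →
    Integrable (fun z : Euc N × Euc N => K z.1 z.2 * f z.2 * g z.1) (ν.prod μ) ∧
    ‖∫ s, ∫ t, K s t * f t * g s ∂μ ∂ν‖ ≤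
      C * (eLpNorm f (ENNReal.ofReal p) μ).toReal *
        (eLpNorm g (ENNReal.ofReal p') ν).toReal

/-- singular kernel: measurable, locally L² off the diagonal -/
def SingKernel {N : ℕ} (μ ν : Measure (Euc N)) (K : Euc N → Euc N → ℂ) : Prop :=
  Measurable (Function.uncurry K) ∧
  ∀ Q : Set (Euc N × Euc N), IsCompact Q → (∀ z ∈ Q, z.1 ≠ z.2) →
    ∫⁻ z in Q, (‖K z.1 z.2‖₊ : ℝ≥0∞) ^ 2 ∂(ν.prod μ) < ⊤

/-!
Restricted bounds add when kernels are subtracted, and `M_ε = 1 - ρ̂(·/ε)`, so it suffices to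
bound the kernel `K(s,t) ρ̂((t - s)/ε)` by `‖ρ‖₁ C`. Expanding `ρ̂` and using Fubini, its pairing
with `f ⊗ g` is an average, against `ρ(x) dx`, of pairings of `K` with the modulated functions
`f · e^{-i⟨·, x/ε⟩}` and `g · e^{i⟨·, x/ε⟩}`, because the phase of `t - s` splits into a factor in
`t` and one in `s`. Modulation by a unimodular factor keeps functions bounded, compactly supported
and separated, and does not change their `L^p` norms, so each of these pairings is bounded by
`C ‖f‖_p ‖g‖_{p'}`.
-/

section

variable {N : ℕ}

def planeWave (ξ t : Euc N) : ℂ := exp (-(I * ((inner ℝ t ξ : ℝ) : ℂ)))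

lemma norm_planeWave (ξ t : Euc N) : ‖planeWave ξ t‖ = 1 := by
  rw [planeWave, show -(I * ((inner ℝ t ξ : ℝ) : ℂ)) = ((-inner ℝ t ξ : ℝ) : ℂ) * I by
    push_cast; ring, norm_exp_ofReal_mul_I]

@[fun_prop]
lemma Continuous.planeWave {X : Type*} [TopologicalSpace X] {ξ t : X → Euc N}
    (hξ : Continuous ξ) (ht : Continuous t) : Continuous fun x => planeWave (ξ x) (t x) := by
  unfold _root_.planeWave; fun_prop

lemma planeWave_smul_sub (c : ℝ) (x s t : Euc N) :
    planeWave x (c • (t - s)) = planeWave (c • x) t * planeWave (-(c • x)) s := by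
  simp only [planeWave, ← exp_add, real_inner_smul_left, real_inner_smul_right, inner_sub_left,
    inner_neg_right]
  push_cast; ring_nf

lemma ft_eq_integral_planeWave (ρ : Euc N → ℂ) (s : Euc N) :
    ft ρ s = ∫ x, ρ x * planeWave x s := rfl

lemma continuous_ft {ρ : Euc N → ℂ} (hρ : Integrable ρ) : Continuous (ft ρ) := by
  change Continuous fun s => ∫ x, ρ x * planeWave x s
  refine continuous_of_dominated (bound := fun x => ‖ρ x‖) (fun s => ?_) (fun s => ?_) hρ.norm ?_
  · exact hρ.aestronglyMeasurable.mul
      (continuous_id.planeWave continuous_const).aestronglyMeasurable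
  · exact .of_forall fun x => by rw [norm_mul, norm_planeWave, mul_one]
  · exact .of_forall fun x => continuous_const.mul (continuous_const.planeWave continuous_id)

lemma norm_ft_le (ρ : Euc N → ℂ) (s : Euc N) : ‖ft ρ s‖ ≤ ∫ x, ‖ρ x‖ := by
  rw [ft_eq_integral_planeWave]
  refine (norm_integral_le_integral_norm _).trans_eq ?_
  simp only [norm_mul, norm_planeWave, mul_one]

lemma GoodFun.mul {f e : Euc N → ℂ} (hf : GoodFun f) (he : Measurable e) {B : ℝ}
    (heB : ∀ x, ‖e x‖ ≤ B) : GoodFun fun x => f x * e x := by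
  obtain ⟨hfm, ⟨Cf, hCf⟩, hfc⟩ := hf
  refine ⟨hfm.mul he, ⟨Cf * B, fun x => ?_⟩, hfc.mul_right⟩
  rw [norm_mul]
  exact mul_le_mul (hCf x) (heB x) (norm_nonneg _) ((norm_nonneg _).trans (hCf x))

lemma Separated.mul {f g : Euc N → ℂ} (hfg : Separated f g) (e₁ e₂ : Euc N → ℂ) :
    Separated (fun t => f t * e₁ t) (fun s => g s * e₂ s) := by
  obtain ⟨a, ha, hsep⟩ := hfg
  exact ⟨a, ha, fun t ht s hs => hsep t (left_ne_zero_of_mul ht) s (left_ne_zero_of_mul hs)⟩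

lemma eLpNorm_mul_planeWave {μ : Measure (Euc N)} (f : Euc N → ℂ) (ξ : Euc N) (q : ℝ≥0∞) :
    eLpNorm (fun t => f t * planeWave ξ t) q μ = eLpNorm f q μ :=
  eLpNorm_congr_norm_ae <| .of_forall fun t => by rw [norm_mul, norm_planeWave, mul_one]

lemma GoodFun.mul_planeWave {f : Euc N → ℂ} (hf : GoodFun f) (ξ : Euc N) :
    GoodFun fun t => f t * planeWave ξ t :=
  hf.mul (continuous_const.planeWave continuous_id).measurable fun t => (norm_planeWave ξ t).le

lemma integral_mul_ft_smul_sub {κ : Measure (Euc N × Euc N)} [SFinite κ]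
    {Φ : Euc N × Euc N → ℂ} (hΦ : Integrable Φ κ) {ρ : Euc N → ℂ} (hρ : Integrable ρ) (c : ℝ) :
    ∫ z, Φ z * ft ρ (c • (z.2 - z.1)) ∂κ =
      ∫ x, ρ x * ∫ z, Φ z * (planeWave (c • x) z.2 * planeWave (-(c • x)) z.1) ∂κ := by
  have hwave : Continuous fun w : (Euc N × Euc N) × Euc N =>
      planeWave w.2 (c • (w.1.2 - w.1.1)) := by
    fun_prop
  have hint : Integrable (fun w : (Euc N × Euc N) × Euc N =>
      Φ w.1 * (ρ w.2 * planeWave w.2 (c • (w.1.2 - w.1.1)))) (κ.prod volume) :=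
    ((hΦ.mul_prod hρ).bdd_mul hwave.aestronglyMeasurable
      (.of_forall fun w => (norm_planeWave _ _).le)).congr (.of_forall fun w => by ring)
  calc ∫ z, Φ z * ft ρ (c • (z.2 - z.1)) ∂κ
      = ∫ z, ∫ x, Φ z * (ρ x * planeWave x (c • (z.2 - z.1))) ∂volume ∂κ := by
        simp only [ft_eq_integral_planeWave, integral_const_mul]
    _ = ∫ x, ∫ z, Φ z * (ρ x * planeWave x (c • (z.2 - z.1))) ∂κ ∂volume :=
        integral_integral_swap hint
    _ = _ := by
        congr 1 with x
        rw [← integral_const_mul]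
        congr 1 with z
        rw [planeWave_smul_sub]
        ring

namespace RestrBdd

variable {μ ν : Measure (Euc N)} [SFinite μ] [SFinite ν] {K : Euc N → Euc N → ℂ} {p p' C : ℝ}

lemma norm_integral_prod_le (hK : RestrBdd μ ν K p p' C) {f g : Euc N → ℂ} (hf : GoodFun f)
    (hg : GoodFun g) (hfg : Separated f g) :
    ‖∫ z, K z.1 z.2 * f z.2 * g z.1 ∂ν.prod μ‖ ≤
      C * (eLpNorm f (ENNReal.ofReal p) μ).toReal * (eLpNorm g (ENNReal.ofReal p') ν).toReal := by
  obtain ⟨hint, hle⟩ := hK f g hf hg hfg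
  rwa [integral_prod _ hint]

lemma norm_integral_prod_planeWave_le (hK : RestrBdd μ ν K p p' C) {f g : Euc N → ℂ}
    (hf : GoodFun f) (hg : GoodFun g) (hfg : Separated f g) (ξ η : Euc N) :
    ‖∫ z, K z.1 z.2 * (f z.2 * planeWave ξ z.2) * (g z.1 * planeWave η z.1) ∂ν.prod μ‖ ≤
      C * (eLpNorm f (ENNReal.ofReal p) μ).toReal * (eLpNorm g (ENNReal.ofReal p') ν).toReal := by
  simpa only [eLpNorm_mul_planeWave] using
    hK.norm_integral_prod_le (hf.mul_planeWave ξ) (hg.mul_planeWave η) (hfg.mul _ _)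

lemma sub {K₁ K₂ : Euc N → Euc N → ℂ} {C₁ C₂ : ℝ} (h₁ : RestrBdd μ ν K₁ p p' C₁)
    (h₂ : RestrBdd μ ν K₂ p p' C₂) :
    RestrBdd μ ν (fun s t => K₁ s t - K₂ s t) p p' (C₁ + C₂) := by
  intro f g hf hg hfg
  obtain ⟨hint₁, -⟩ := h₁ f g hf hg hfg
  obtain ⟨hint₂, -⟩ := h₂ f g hf hg hfg
  have hint : Integrable (fun z : Euc N × Euc N => (K₁ z.1 z.2 - K₂ z.1 z.2) * f z.2 * g z.1)
      (ν.prod μ) :=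
    (hint₁.sub hint₂).congr (.of_forall fun z => by simp only [Pi.sub_apply]; ring)
  refine ⟨hint, ?_⟩
  rw [← integral_prod _ hint]
  simp only [sub_mul]
  rw [integral_sub hint₁ hint₂, add_mul, add_mul]
  exact (norm_sub_le _ _).trans
    (add_le_add (h₁.norm_integral_prod_le hf hg hfg) (h₂.norm_integral_prod_le hf hg hfg))

lemma mul_ft_smul_sub (hK : RestrBdd μ ν K p p' C) {ρ : Euc N → ℂ} (hρ : Integrable ρ) (c : ℝ) :
    RestrBdd μ ν (fun s t => K s t * ft ρ (c • (t - s))) p p' ((∫ x, ‖ρ x‖) * C) := by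
  intro f g hf hg hfg
  obtain ⟨hint, -⟩ := hK f g hf hg hfg
  have hcont : Continuous fun z : Euc N × Euc N => ft ρ (c • (z.2 - z.1)) :=
    (continuous_ft hρ).comp (by fun_prop : Continuous fun z : Euc N × Euc N => c • (z.2 - z.1))
  have hint' : Integrable (fun z : Euc N × Euc N =>
      K z.1 z.2 * ft ρ (c • (z.2 - z.1)) * f z.2 * g z.1) (ν.prod μ) :=
    (hint.bdd_mul hcont.aestronglyMeasurable (.of_forall fun z => norm_ft_le ρ _)).congr
      (.of_forall fun z => by ring)
  refine ⟨hint', ?_⟩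
  set B := C * (eLpNorm f (ENNReal.ofReal p) μ).toReal * (eLpNorm g (ENNReal.ofReal p') ν).toReal
  have hpair (x : Euc N) : ‖∫ z, K z.1 z.2 * f z.2 * g z.1 *
      (planeWave (c • x) z.2 * planeWave (-(c • x)) z.1) ∂ν.prod μ‖ ≤ B := by
    convert hK.norm_integral_prod_planeWave_le hf hg hfg (c • x) (-(c • x)) using 4 with z
    ring
  rw [← integral_prod _ hint']
  calc ‖∫ z, K z.1 z.2 * ft ρ (c • (z.2 - z.1)) * f z.2 * g z.1 ∂ν.prod μ‖
      = ‖∫ x, ρ x * ∫ z, K z.1 z.2 * f z.2 * g z.1 *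
          (planeWave (c • x) z.2 * planeWave (-(c • x)) z.1) ∂ν.prod μ‖ := by
        rw [← integral_mul_ft_smul_sub hint hρ c]
        congr 2 with z
        ring
    _ ≤ ∫ x, ‖ρ x‖ * B := norm_integral_le_of_norm_le (hρ.norm.mul_const _)
        (.of_forall fun x => by rw [norm_mul]; gcongr; exact hpair x)
    _ = (∫ x, ‖ρ x‖) * C * (eLpNorm f (ENNReal.ofReal p) μ).toReal *
          (eLpNorm g (ENNReal.ofReal p') ν).toReal := by
        rw [integral_mul_const]; ring

end RestrBdd

end

theorem smooth_regularization_restricted_bound_general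
    {N : ℕ} (p p' C : ℝ)
    (μ ν : Measure (Euc N)) [IsLocallyFiniteMeasure μ]
    [IsLocallyFiniteMeasure ν]
    (K : Euc N → Euc N → ℂ)
    (hKbdd : RestrBdd μ ν K p p' C)
    (ρ : Euc N → ℂ) (hρ : Integrable ρ volume)
    (M : Euc N → ℂ) (hM : ∀ x, M x = 1 - ft ρ x) :
    ∀ ε > (0 : ℝ),
      RestrBdd μ ν (fun s t => K s t * M (ε⁻¹ • (t - s))) p p'
        ((1 + ∫ x : Euc N, ‖ρ x‖) * C) := by
  intro ε _
  have hKM : (fun s t => K s t * M (ε⁻¹ • (t - s))) =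
      fun s t => K s t - K s t * ft ρ (ε⁻¹ • (t - s)) := by
    funext s t
    rw [hM]
    ring
  rw [hKM, add_mul, one_mul]
  exact hKbdd.sub (hKbdd.mul_ft_smul_sub hρ ε⁻¹)

/-- multiplying a restrictedly bounded kernel by the mollifier
`M_ε(t-s)`, `M = 1 - ρ̂`, keeps it restrictedly bounded with bound `(1+‖ρ‖₁)C`. -/
theorem smooth_regularization_restricted_bound
    {N : ℕ} (p p' C : ℝ) (hp : 1 < p) (hpp' : 1 / p + 1 / p' = 1)
    (μ ν : Measure (Euc N)) [IsLocallyFiniteMeasure μ] [μ.InnerRegular]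
    [IsLocallyFiniteMeasure ν] [ν.InnerRegular]
    (K : Euc N → Euc N → ℂ) (hK : SingKernel μ ν K)
    (hKbdd : RestrBdd μ ν K p p' C)
    (ρ : Euc N → ℂ) (hρ : Integrable ρ volume)
    (M : Euc N → ℂ) (hM : ∀ x, M x = 1 - ft ρ x) :
    ∀ ε > (0 : ℝ),
      RestrBdd μ ν (fun s t => K s t * M (ε⁻¹ • (t - s))) p p'
        ((1 + ∫ x : Euc N, ‖ρ x‖) * C) :=
  smooth_regularization_restricted_bound_general p p' C μ ν K hKbdd ρ hρ M hM

end
end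

section
/- Let h ∈ L¹(ℝ^N × ℝ^N) (with respect to Lebesgue measure on ℝ^{2N}) and let M = ĥ be its Fourier transform on ℝ^{2N}, viewed as a function M(s,t) on ℝ^N × ℝ^N. Then M is a Schur multiplier with Schur norm at most ‖h‖_{L¹}: for every p ∈ (1,∞), all Radon measures μ, ν on ℝ^N, and every singular kernel K that is restrictedly L^p bounded with bound C, the kernel (s,t) ↦ M(s,t) K(s,t) is restrictedly L^p bounded with bound ‖h‖_{L¹} C. -/
open MeasureTheory Filter Metric Complex Topology ENNReal

noncomputable section

/-! Expanding `ĥ(s,t) = ∫ h(a,b) e^{-i a·s} e^{-i b·t} d(a,b)` and applying Fubini, the pairing of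
`M K` with `f ⊗ g` becomes the `h`-weighted integral over `(a,b)` of the pairings of `K` with the
modulated functions `e^{-i b·} f` and `e^{-i a·} g`. Multiplying by a unimodular character keeps
functions bounded, Borel and compactly supported, does not enlarge supports and preserves every
`L^q` norm, so each of these pairings is bounded by `C ‖f‖_p ‖g‖_{p'}`; integrating against `|h|`
gives the bound `‖h‖₁ C`. -/

lemma GoodFun.mul_bounded {N : ℕ} {f φ : Euc N → ℂ} (hf : GoodFun f) (hφ : Measurable φ)
    {B : ℝ} (hB : ∀ x, ‖φ x‖ ≤ B) : GoodFun fun x => f x * φ x := by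
  obtain ⟨hfm, ⟨Cf, hCf⟩, hfc⟩ := hf
  refine ⟨hfm.mul hφ, ⟨Cf * B, fun x => ?_⟩, hfc.mul_right⟩
  rw [norm_mul]
  exact mul_le_mul (hCf x) (hB x) (norm_nonneg _) ((norm_nonneg _).trans (hCf x))

lemma Separated.mono {N : ℕ} {f g f' g' : Euc N → ℂ} (hfg : Separated f g)
    (hf : Function.support f' ⊆ Function.support f)
    (hg : Function.support g' ⊆ Function.support g) : Separated f' g' := by
  obtain ⟨a, ha, hsep⟩ := hfg
  exact ⟨a, ha, fun x hx y hy => hsep x (hf hx) y (hg hy)⟩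

lemma eLpNorm_mul_unimodular {α : Type*} [MeasurableSpace α] {μ : Measure α} {f φ : α → ℂ}
    (hφ : ∀ x, ‖φ x‖ = 1) (q : ℝ≥0∞) :
    eLpNorm (fun x => f x * φ x) q μ = eLpNorm f q μ :=
  eLpNorm_congr_norm_ae (ae_of_all _ fun x => by rw [norm_mul, hφ x, mul_one])

theorem RestrBdd.mul_unimodular {N : ℕ} {μ ν : Measure (Euc N)} {K : Euc N → Euc N → ℂ}
    {p p' C : ℝ} (hK : RestrBdd μ ν K p p' C) {u v : Euc N → ℂ}
    (hu : Measurable u) (hv : Measurable v) (hu1 : ∀ s, ‖u s‖ = 1) (hv1 : ∀ t, ‖v t‖ = 1) :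
    RestrBdd μ ν (fun s t => u s * v t * K s t) p p' C := by
  intro f g hf hg hfg
  obtain ⟨hint, hbd⟩ := hK (fun t => f t * v t) (fun s => g s * u s)
    (hf.mul_bounded hv fun t => (hv1 t).le) (hg.mul_bounded hu fun s => (hu1 s).le)
    (hfg.mono (Function.support_mul_subset_left _ _) (Function.support_mul_subset_left _ _))
  have hrw : ∀ s t, u s * v t * K s t * f t * g s = K s t * (f t * v t) * (g s * u s) :=
    fun _ _ => by ring
  rw [eLpNorm_mul_unimodular hv1, eLpNorm_mul_unimodular hu1] at hbd
  simp only [hrw]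
  exact ⟨hint, hbd⟩

lemma norm_integral_mul_le_of_norm_le {α : Type*} [MeasurableSpace α] {ρ : Measure α}
    {h I : α → ℂ} (hh : Integrable h ρ) {B : ℝ} (hI : ∀ z, ‖I z‖ ≤ B) :
    ‖∫ z, h z * I z ∂ρ‖ ≤ (∫ z, ‖h z‖ ∂ρ) * B :=
  calc ‖∫ z, h z * I z ∂ρ‖ ≤ ∫ z, ‖h z‖ * ‖I z‖ ∂ρ := by
        simpa only [norm_mul] using norm_integral_le_integral_norm (fun z => h z * I z)
    _ ≤ ∫ z, ‖h z‖ * B ∂ρ :=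
        integral_mono_of_nonneg (ae_of_all _ fun z => by positivity) (hh.norm.mul_const B)
          (ae_of_all _ fun z => mul_le_mul_of_nonneg_left (hI z) (norm_nonneg _))
    _ = (∫ z, ‖h z‖ ∂ρ) * B := integral_mul_const B _

theorem RestrBdd.integral_mul {N : ℕ} {Z : Type*} [MeasurableSpace Z] {ρ : Measure Z} [SFinite ρ]
    {μ ν : Measure (Euc N)} [SFinite μ] [SFinite ν] {K : Euc N → Euc N → ℂ} {p p' C : ℝ}
    (hK : RestrBdd μ ν K p p' C) {h : Z → ℂ} (hh : Integrable h ρ) {u v : Z → Euc N → ℂ}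
    (hu : Measurable (Function.uncurry u)) (hv : Measurable (Function.uncurry v))
    (hu1 : ∀ z s, ‖u z s‖ = 1) (hv1 : ∀ z t, ‖v z t‖ = 1) :
    RestrBdd μ ν (fun s t => (∫ z, h z * u z s * v z t ∂ρ) * K s t) p p'
      ((∫ z, ‖h z‖ ∂ρ) * C) := by
  intro f g hf hg hfg
  have hmod z := hK.mul_unimodular (u := u z) (v := v z) (hu.comp measurable_prodMk_left)
    (hv.comp measurable_prodMk_left) (hu1 z) (hv1 z) f g hf hg hfg
  obtain ⟨hKfg, -⟩ := hK f g hf hg hfg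
  set G : (Euc N × Euc N) × Z → ℂ := fun q =>
    h q.2 * (u q.2 q.1.1 * v q.2 q.1.2 * (K q.1.1 q.1.2 * f q.1.2 * g q.1.1))
  have hG : Integrable G ((ν.prod μ).prod ρ) := by
    refine (hKfg.norm.mul_prod hh.norm).mono' ?_ (ae_of_all _ fun q => ?_)
    · exact hh.aestronglyMeasurable.comp_snd.mul
        (((hu.comp (measurable_snd.prodMk measurable_fst.fst)).mul
          (hv.comp (measurable_snd.prodMk measurable_fst.snd))).aestronglyMeasurable.mul
            hKfg.aestronglyMeasurable.comp_fst)
    · simp only [G, norm_mul, hu1, hv1, one_mul]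
      exact le_of_eq (by ring)
  have hrep : ∀ s t,
      (∫ z, h z * u z s * v z t ∂ρ) * K s t * f t * g s = ∫ z, G ((s, t), z) ∂ρ := by
    intro s t
    rw [← integral_mul_const, ← integral_mul_const, ← integral_mul_const]
    exact integral_congr_ae (ae_of_all _ fun z => by simp only [G]; ring)
  simp only [hrep]
  refine ⟨hG.integral_prod_left, ?_⟩
  have hslice z : ∫ w, G (w, z) ∂(ν.prod μ) =
      h z * ∫ s, ∫ t, u z s * v z t * K s t * f t * g s ∂μ ∂ν := by
    rw [integral_integral (hmod z).1, ← integral_const_mul]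
    exact integral_congr_ae (ae_of_all _ fun w => by simp only [G]; ring)
  rw [integral_integral hG.integral_prod_left, integral_integral_swap hG]
  simp only [hslice]
  rw [mul_assoc, mul_assoc]
  exact norm_integral_mul_le_of_norm_le hh fun z => by rw [← mul_assoc]; exact (hmod z).2

lemma norm_exp_neg_I_mul_ofReal (r : ℝ) : ‖Complex.exp (-(Complex.I * r))‖ = 1 := by
  rw [← mul_neg, ← Complex.ofReal_neg, Complex.norm_exp_I_mul_ofReal]

/-- the Fourier transform `M(s,t) = ĥ(s,t)` of `h ∈ L¹(ℝ^{2N})` is a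
Schur multiplier with Schur norm at most `‖h‖_{L¹}`. -/
theorem wiener_2N_schur_multiplier
    {N : ℕ} (h : Euc N × Euc N → ℂ) (hh : Integrable h volume)
    (M : Euc N → Euc N → ℂ)
    (hM : ∀ s t : Euc N, M s t =
      ∫ z : Euc N × Euc N,
        h z * Complex.exp (-(Complex.I * (((inner ℝ z.1 s : ℝ) + (inner ℝ z.2 t : ℝ) : ℝ) : ℂ)))) :
    ∀ p p' C : ℝ, 1 < p → 1 / p + 1 / p' = 1 →
    ∀ μ ν : Measure (Euc N),
      IsLocallyFiniteMeasure μ → μ.InnerRegular →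
      IsLocallyFiniteMeasure ν → ν.InnerRegular →
    ∀ K : Euc N → Euc N → ℂ, SingKernel μ ν K → RestrBdd μ ν K p p' C →
      RestrBdd μ ν (fun s t => M s t * K s t) p p'
        ((∫ z : Euc N × Euc N, ‖h z‖) * C) := by
  intro p p' C _ _ μ ν _ _ _ _ K _ hK
  have hM' : (fun s t => M s t * K s t) = fun s t =>
      (∫ z, h z * Complex.exp (-(Complex.I * (inner ℝ z.1 s : ℝ))) *
        Complex.exp (-(Complex.I * (inner ℝ z.2 t : ℝ)))) * K s t := by
    ext s t
    rw [hM]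
    congr 1
    refine integral_congr_ae (ae_of_all _ fun z => ?_)
    dsimp only
    rw [mul_assoc, ← Complex.exp_add]
    push_cast
    ring_nf
  rw [hM']
  exact hK.integral_mul hh
    (u := fun z s => Complex.exp (-(Complex.I * (inner ℝ z.1 s : ℝ))))
    (v := fun z t => Complex.exp (-(Complex.I * (inner ℝ z.2 t : ℝ))))
    (by unfold Function.uncurry; fun_prop) (by unfold Function.uncurry; fun_prop)
    (fun _ _ => norm_exp_neg_I_mul_ofReal _) fun _ _ => norm_exp_neg_I_mul_ofReal _
end
end

section
/- Let k > N/2 and let ρ : ℝ^N → ℂ be such that x ↦ (1+|x|^k) ρ(x) belongs to L²(ℝ^N); let m = ρ̂ be the Fourier transform of ρ (so that m lies in the Sobolev space H^k(ℝ^N)). Then there is a constant C₁, depending only on N, k and ‖(1+|·|^k)ρ‖_{L²}, such that for every ε > 0, every p ∈ (1,∞), all Radon measures μ, ν on ℝ^N, and every singular kernel K that is restrictedly L^p bounded with bound C, the kernel (s,t) ↦ m((t−s)/ε) K(s,t) is restrictedly L^p bounded with bound C₁ C. In other words, the functions (s,t) ↦ m((t−s)/ε) are Schur multipliers with uniformly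 bounded Schur norms. -/
/-!
Since `2k > N`, the weight `(1 + |x|^k)⁻¹` lies in `L²`, so `ρ ∈ L¹` by Cauchy–Schwarz. Writing
`ρ̂((t - s)/ε) = ∫ ρ(y) e^{i⟨s,y⟩/ε} e^{-i⟨t,y⟩/ε} dy` exhibits the multiplier as a `ρ`-average of
products `b(s) a(t)` of unimodular functions. Multiplying `K` by such a product only modulates the
test functions `f` and `g`, which keeps them admissible with the same `L^p` norms; by Fubini the
averaged kernel therefore has bound `‖ρ‖₁ C`, whatever `ε` is.
-/

open MeasureTheory Filter Metric Complex Topology ENNReal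

noncomputable section

lemma one_add_pow_le_two_pow_mul {t : ℝ} (ht : 0 ≤ t) (k : ℕ) :
    (1 + t) ^ k ≤ 2 ^ k * (1 + t ^ k) :=
  calc (1 + t) ^ k ≤ 2 ^ (k - 1) * (1 ^ k + t ^ k) := add_pow_le zero_le_one ht k
    _ ≤ 2 ^ k * (1 + t ^ k) := by
      rw [one_pow]
      gcongr
      · norm_num
      · omega

section Weight

variable {E : Type*} [NormedAddCommGroup E] [NormedSpace ℝ E] [FiniteDimensional ℝ E]
  [MeasurableSpace E] [BorelSpace E] {μ : Measure E} [μ.IsAddHaarMeasure]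

lemma memLp_two_inv_one_add_norm_pow {k : ℕ} (hk : (Module.finrank ℝ E : ℝ) < 2 * k) :
    MemLp (fun x : E => (1 + ‖x‖ ^ k)⁻¹) 2 μ := by
  have hpos : ∀ x : E, 0 < 1 + ‖x‖ ^ k := fun x => by positivity
  have hcont : Continuous fun x : E => (1 + ‖x‖ ^ k)⁻¹ :=
    (continuous_const.add (continuous_norm.pow k)).inv₀ fun x => (hpos x).ne'
  rw [memLp_two_iff_integrable_sq hcont.aestronglyMeasurable]
  refine ((integrable_one_add_norm hk).const_mul (4 ^ k)).mono'
    (hcont.pow 2).aestronglyMeasurable (.of_forall fun x => ?_)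
  have h : (1 + ‖x‖ ^ k)⁻¹ ≤ 2 ^ k * ((1 + ‖x‖) ^ k)⁻¹ := by
    rw [← div_eq_mul_inv, le_div_iff₀ (by positivity), inv_mul_le_iff₀ (by positivity), mul_comm]
    exact one_add_pow_le_two_pow_mul (norm_nonneg x) k
  calc ‖(1 + ‖x‖ ^ k)⁻¹ ^ 2‖ = (1 + ‖x‖ ^ k)⁻¹ ^ 2 := Real.norm_of_nonneg (by positivity)
    _ ≤ (2 ^ k * ((1 + ‖x‖) ^ k)⁻¹) ^ 2 := by gcongr
    _ = 4 ^ k * (1 + ‖x‖) ^ (-(2 * k : ℝ)) := by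
      rw [Real.rpow_neg (by positivity), show (2 * k : ℝ) = ((2 * k : ℕ) : ℝ) by push_cast; rfl,
        Real.rpow_natCast, show (4 : ℝ) = 2 ^ 2 by norm_num, ← pow_mul]
      ring

lemma integrable_of_memLp_two_one_add_norm_pow_mul {k : ℕ}
    (hk : (Module.finrank ℝ E : ℝ) < 2 * k) {ρ : E → ℂ}
    (hρ : MemLp (fun x => ((1 + ‖x‖ ^ k : ℝ) : ℂ) * ρ x) 2 μ) : Integrable ρ μ := by
  have h : MemLp ((fun x => (((1 + ‖x‖ ^ k)⁻¹ : ℝ) : ℂ)) • fun x => ((1 + ‖x‖ ^ k : ℝ) : ℂ) * ρ x)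
      1 μ := hρ.smul (memLp_two_inv_one_add_norm_pow hk).ofReal
  rw [memLp_one_iff_integrable] at h
  refine h.congr (.of_forall fun x => ?_)
  have hpos : (0 : ℝ) < 1 + ‖x‖ ^ k := by positivity
  rw [Pi.smul_apply', smul_eq_mul, ← mul_assoc, ← Complex.ofReal_mul, inv_mul_cancel₀ hpos.ne',
    Complex.ofReal_one, one_mul]

end Weight

lemma ft_sub {N : ℕ} (ρ : Euc N → ℂ) (u v : Euc N) :
    ft ρ (u - v) = ∫ x, ρ x * (cexp ((inner ℝ v x : ℝ) * I) * cexp ((-inner ℝ u x : ℝ) * I)) := by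
  refine integral_congr_ae (.of_forall fun x => ?_)
  simp only [← Complex.exp_add, inner_sub_left]
  push_cast
  ring_nf

section Schur

variable {N : ℕ} {μ ν : Measure (Euc N)} {K : Euc N → Euc N → ℂ} {p p' C : ℝ}

lemma GoodFun.unimodular_mul {f a : Euc N → ℂ} (hf : GoodFun f) (ha : Measurable a)
    (ha1 : ∀ t, ‖a t‖ = 1) : GoodFun fun t => a t * f t := by
  obtain ⟨hfm, ⟨Cf, hCf⟩, hfc⟩ := hf
  exact ⟨ha.mul hfm, ⟨Cf, fun t => by simpa [ha1] using hCf t⟩, hfc.mul_left⟩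

lemma Separated.mul_left {f g a b : Euc N → ℂ} (hfg : Separated f g) :
    Separated (fun t => a t * f t) (fun s => b s * g s) := by
  obtain ⟨r, hr, hsep⟩ := hfg
  exact ⟨r, hr, fun x hx y hy =>
    hsep x (Function.support_mul_subset_right _ _ hx) y (Function.support_mul_subset_right _ _ hy)⟩

lemma RestrBdd.modulate (hK : RestrBdd μ ν K p p' C) {a b : Euc N → ℂ}
    (ha : Measurable a) (hb : Measurable b) (ha1 : ∀ t, ‖a t‖ = 1) (hb1 : ∀ s, ‖b s‖ = 1) :
    RestrBdd μ ν (fun s t => b s * a t * K s t) p p' C := by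
  intro f g hf hg hfg
  have hrearrange : ∀ s t, b s * a t * K s t * f t * g s = K s t * (a t * f t) * (b s * g s) :=
    fun s t => by ring
  have hnorm : ∀ {c : Euc N → ℂ} {h : Euc N → ℂ} (q : ℝ≥0∞) (κ : Measure (Euc N)),
      (∀ x, ‖c x‖ = 1) → eLpNorm (fun x => c x * h x) q κ = eLpNorm h q κ :=
    fun q κ hc => eLpNorm_congr_norm_ae (.of_forall fun x => by simp [hc])
  obtain ⟨hint, hbound⟩ :=
    hK _ _ (hf.unimodular_mul ha ha1) (hg.unimodular_mul hb hb1) hfg.mul_left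
  simp only [hrearrange]
  rw [hnorm _ _ ha1, hnorm _ _ hb1] at hbound
  exact ⟨hint, hbound⟩

lemma RestrBdd.integral_mul_s8 {Y : Type*} [MeasurableSpace Y] {κ : Measure Y} [SFinite κ]
    [SFinite μ] [SFinite ν] (hK : RestrBdd μ ν K p p' C) {ρ : Y → ℂ} (hρ : Integrable ρ κ)
    {φ : Y → Euc N → Euc N → ℂ} (hφ : Measurable fun w : Y × Euc N × Euc N => φ w.1 w.2.1 w.2.2)
    (hφ1 : ∀ y s t, ‖φ y s t‖ ≤ 1) (hφK : ∀ y, RestrBdd μ ν (fun s t => φ y s t * K s t) p p' C) :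
    RestrBdd μ ν (fun s t => (∫ y, ρ y * φ y s t ∂κ) * K s t) p p' ((∫ y, ‖ρ y‖ ∂κ) * C) := by
  intro f g hf hg hfg
  obtain ⟨hKfg, -⟩ := hK f g hf hg hfg
  set Φ : (Euc N × Euc N) × Y → ℂ := fun w =>
    ρ w.2 * φ w.2 w.1.1 w.1.2 * (K w.1.1 w.1.2 * f w.1.2 * g w.1.1)
  have hΦ : Integrable Φ ((ν.prod μ).prod κ) := by
    refine (hKfg.norm.mul_prod hρ.norm).mono' ((hρ.1.comp_snd.mul
      (hφ.comp measurable_swap).aestronglyMeasurable).mul hKfg.1.comp_fst) (.of_forall fun w => ?_)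
    simp only [Φ, norm_mul]
    calc _ = ‖φ w.2 w.1.1 w.1.2‖ * (‖K w.1.1 w.1.2‖ * ‖f w.1.2‖ * ‖g w.1.1‖ * ‖ρ w.2‖) := by ring
      _ ≤ _ := mul_le_of_le_one_left (by positivity) (hφ1 _ _ _)
  have hfiber : ∀ z : Euc N × Euc N,
      ∫ y, Φ (z, y) ∂κ = (∫ y, ρ y * φ y z.1 z.2 ∂κ) * K z.1 z.2 * f z.2 * g z.1 := fun z => by
    simp only [Φ]
    rw [integral_mul_const]
    ring
  have hslice : ∀ y, ∫ z, Φ (z, y) ∂(ν.prod μ) =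
      ρ y * ∫ s, ∫ t, φ y s t * K s t * f t * g s ∂μ ∂ν := fun y => by
    rw [← integral_prod _ (hφK y f g hf hg hfg).1, ← integral_const_mul]
    simp only [Φ]
    congr 1 with z
    ring
  have hint : Integrable (fun z : Euc N × Euc N =>
      (∫ y, ρ y * φ y z.1 z.2 ∂κ) * K z.1 z.2 * f z.2 * g z.1) (ν.prod μ) := by
    simpa only [hfiber] using hΦ.integral_prod_left
  refine ⟨hint, ?_⟩
  calc ‖∫ s, ∫ t, (∫ y, ρ y * φ y s t ∂κ) * K s t * f t * g s ∂μ ∂ν‖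
      = ‖∫ y, ρ y * ∫ s, ∫ t, φ y s t * K s t * f t * g s ∂μ ∂ν ∂κ‖ := by
        rw [← integral_prod _ hint]
        simp only [← hfiber, ← hslice]
        rw [integral_integral_swap hΦ]
    _ ≤ ∫ y, ‖ρ y‖ * (C * (eLpNorm f (ENNReal.ofReal p) μ).toReal *
          (eLpNorm g (ENNReal.ofReal p') ν).toReal) ∂κ :=
        norm_integral_le_of_norm_le (hρ.norm.mul_const _) (.of_forall fun y => by
          rw [norm_mul]
          exact mul_le_mul_of_nonneg_left (hφK y f g hf hg hfg).2 (norm_nonneg _))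
    _ = _ := by
      rw [integral_mul_const]
      ring

end Schur

theorem sobolev_dilates_uniform_schur_multipliers_general
    {N : ℕ} (k : ℕ) (hk : (N : ℝ) / 2 < k)
    (ρ : Euc N → ℂ)
    (hL2 : MemLp (fun x : Euc N => ((1 + ‖x‖ ^ k : ℝ) : ℂ) * ρ x) 2 volume)
    (m : Euc N → ℂ) (hm : ∀ x, m x = ft ρ x) :
    ∃ C₁ : ℝ, ∀ ε > (0 : ℝ),
      ∀ p p' C : ℝ, 1 < p → 1 / p + 1 / p' = 1 →
      ∀ μ ν : Measure (Euc N),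
        IsLocallyFiniteMeasure μ → μ.InnerRegular →
        IsLocallyFiniteMeasure ν → ν.InnerRegular →
      ∀ K : Euc N → Euc N → ℂ, SingKernel μ ν K → RestrBdd μ ν K p p' C →
        RestrBdd μ ν (fun s t => m (ε⁻¹ • (t - s)) * K s t) p p' (C₁ * C) := by
  have hρ : Integrable ρ volume :=
    integrable_of_memLp_two_one_add_norm_pow_mul (by rw [finrank_euclideanSpace_fin]; linarith) hL2
  refine ⟨∫ y, ‖ρ y‖, fun ε _ p p' C _ _ μ ν _ _ _ _ K _ hK => ?_⟩
  have : SigmaFinite μ := sigmaFinite_of_locallyFinite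
  have : SigmaFinite ν := sigmaFinite_of_locallyFinite
  set a : Euc N → Euc N → ℂ := fun y t => cexp ((-inner ℝ (ε⁻¹ • t) y : ℝ) * I)
  set b : Euc N → Euc N → ℂ := fun y s => cexp ((inner ℝ (ε⁻¹ • s) y : ℝ) * I)
  have hmult : (fun s t => m (ε⁻¹ • (t - s)) * K s t) =
      fun s t => (∫ y, ρ y * (b y s * a y t)) * K s t := by
    funext s t
    rw [hm, smul_sub, ft_sub]
  have ha : ∀ y, Measurable (a y) := by fun_prop
  have hb : ∀ y, Measurable (b y) := by fun_prop
  have hab : Measurable fun w : Euc N × Euc N × Euc N => b w.1 w.2.1 * a w.1 w.2.2 := by fun_prop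
  have ha1 : ∀ y t, ‖a y t‖ = 1 := fun _ _ => norm_exp_ofReal_mul_I _
  have hb1 : ∀ y s, ‖b y s‖ = 1 := fun _ _ => norm_exp_ofReal_mul_I _
  rw [hmult]
  exact hK.integral_mul_s8 hρ hab (fun y s t => by rw [norm_mul, ha1, hb1, one_mul])
    fun y => hK.modulate (ha y) (hb y) (ha1 y) (hb1 y)

/-- if `m = ρ̂` with `(1+|x|^k)ρ ∈ L²`, `k > N/2`, then the dilated
functions `(s,t) ↦ m((t-s)/ε)` are Schur multipliers with uniformly bounded
Schur norms: there is `C₁ = C₁(N, k, ‖(1+|·|^k)ρ‖₂)` that works for all `ε > 0`. -/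
theorem sobolev_dilates_uniform_schur_multipliers
    {N : ℕ} (k : ℕ) (hk : (N : ℝ) / 2 < k)
    (ρ : Euc N → ℂ) (hmeas : Measurable ρ)
    (hL2 : MemLp (fun x : Euc N => ((1 + ‖x‖ ^ k : ℝ) : ℂ) * ρ x) 2 volume)
    (m : Euc N → ℂ) (hm : ∀ x, m x = ft ρ x) :
    ∃ C₁ : ℝ, ∀ ε > (0 : ℝ),
      ∀ p p' C : ℝ, 1 < p → 1 / p + 1 / p' = 1 →
      ∀ μ ν : Measure (Euc N),
        IsLocallyFiniteMeasure μ → μ.InnerRegular →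
        IsLocallyFiniteMeasure ν → ν.InnerRegular →
      ∀ K : Euc N → Euc N → ℂ, SingKernel μ ν K → RestrBdd μ ν K p p' C →
        RestrBdd μ ν (fun s t => m (ε⁻¹ • (t - s)) * K s t) p p' (C₁ * C) :=
  sobolev_dilates_uniform_schur_multipliers_general k hk ρ hL2 m hm
end
end

section
/- Let σ be a Radon measure on ℝ^N without atoms (σ({x}) = 0 for every x ∈ ℝ^N). Then there exist sequences of Borel sets E_n^1, E_n^2 ⊆ ℝ^N, n ∈ ℕ, such that: (1) for every n, dist(E_n^1, E_n^2) > 0; (2) for k = 1, 2 the multiplication operators P_n^k f := 1_{E_n^k} f converge to (1/2)·I in the weak operator topology of L²(σ), i.e. for all f, g ∈ L²(σ), ∫_{E_n^k} f(x) \overline{g(x)} dσ(x) → (1/2) ∫ f \overline{g} dσ as n → ∞; (3) for every p ∈ [1,∞), k = 1, 2, and every f ∈ L^p(σ), lim_{n→∞} ‖1_{E_n^k} f‖_{L^p(σ)} = 2^{−1/p} ‖f‖_{L^p(σ)}. -/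
open MeasureTheory Filter Metric Complex Topology ENNReal

noncomputable section

/-!
Bundle finitely many integrable functions into one integrable `h` with values in a Hilbert
space and put `ν = ‖h‖ σ`. Being finite and atomless, `ν` cuts the space, up to a remainder of
small mass, into finitely many disjoint pieces of mass at most `δ`. Choosing signs greedily with
the parallelogram law splits the pieces into two groups whose `h`-integrals differ by at most
`(δ ν(univ))^(1/2)`, so each group carries about half of `∫ h`; inner regularity of `ν` shrinks
both groups to disjoint compact sets, which lie at positive distance from each other.
Doing this for the first `n` terms of a dense sequence in `L¹(σ)` with accuracy `1/(n+1)`, and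
using that `f ↦ ∫_E f` is `1`-Lipschitz on `L¹`, yields sets with `∫_{E_n^k} f → ½ ∫ f` for
every `f ∈ L¹`; the `L²` and `Lᵖ` claims are the cases `f ḡ` and `|f|^p`.
-/

open Function

theorem Finset.exists_subset_norm_sum_sub_sum_sdiff_sq_le {ι E : Type*} [DecidableEq ι]
    [NormedAddCommGroup E] [InnerProductSpace ℝ E] (v : ι → E) (s : Finset ι) :
    ∃ t ⊆ s, ‖∑ j ∈ t, v j - ∑ j ∈ s \ t, v j‖ ^ 2 ≤ ∑ j ∈ s, ‖v j‖ ^ 2 := by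
  induction s using Finset.induction_on with
  | empty => exact ⟨∅, subset_rfl, by simp⟩
  | insert a s ha ih =>
    obtain ⟨t, hts, ht⟩ := ih
    have hat : a ∉ t := fun h => ha (hts h)
    set w := ∑ j ∈ t, v j - ∑ j ∈ s \ t, v j with hw
    -- by the parallelogram law, one of `w ± v a` has square norm at most `‖w‖² + ‖v a‖²`
    have hpar := parallelogram_law_with_norm ℝ w (v a)
    rw [sum_insert ha]
    by_cases hle : ‖w + v a‖ ^ 2 ≤ ‖w - v a‖ ^ 2
    · refine ⟨insert a t, insert_subset_insert a hts, ?_⟩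
      rw [insert_sdiff_insert, sdiff_insert_of_notMem ha, sum_insert hat,
        show v a + ∑ j ∈ t, v j - ∑ j ∈ s \ t, v j = w + v a by rw [hw]; abel]
      linarith
    · refine ⟨t, hts.trans (subset_insert a s), ?_⟩
      rw [insert_sdiff_of_notMem _ hat, sum_insert (fun h => ha (mem_sdiff.1 h).1),
        show ∑ j ∈ t, v j - (v a + ∑ j ∈ s \ t, v j) = w - v a by rw [hw]; abel]
      linarith

theorem IsCompact.exists_pos_le_dist_of_disjoint {X : Type*} [PseudoMetricSpace X] {s t : Set X}
    (hs : IsCompact s) (ht : IsClosed t) (hst : Disjoint s t) :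
    ∃ a > (0 : ℝ), ∀ x ∈ s, ∀ y ∈ t, a ≤ dist x y := by
  obtain ⟨r, hr, hrst⟩ := exists_pos_forall_lt_edist hs ht hst
  refine ⟨r, hr, fun x hx y hy => ?_⟩
  have h := hrst x hx y hy
  rw [edist_nndist, ENNReal.coe_lt_coe] at h
  exact (NNReal.coe_lt_coe.2 h).le

section FinePartition

variable {X : Type*} [MetricSpace X] [MeasurableSpace X] [OpensMeasurableSpace X]
  (μ : Measure X) [IsFiniteMeasure μ] [NullSingletonClass μ]

theorem exists_pos_measure_closedBall_lt (x : X) {ε : ℝ≥0∞} (hε : 0 < ε) :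
    ∃ r > 0, μ (closedBall x r) < ε := by
  have h := tendsto_measure_cthickening (μ := μ) (s := {x}) ⟨1, one_pos, measure_ne_top _ _⟩
  rw [closure_singleton, measure_singleton] at h
  have h' : ∀ᶠ r in 𝓝[>] (0 : ℝ), μ (cthickening r {x}) < ε :=
    (h.mono_left nhdsWithin_le_nhds).eventually (gt_mem_nhds hε)
  obtain ⟨r, hrε, hr⟩ := (h'.and self_mem_nhdsWithin).exists
  exact ⟨r, hr, by rwa [← cthickening_singleton x (le_of_lt hr)]⟩

theorem exists_pairwise_disjoint_measure_le_measure_compl_biUnion_le [SecondCountableTopology X]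
    {δ η : ℝ≥0∞} (hδ : 0 < δ) (hη : 0 < η) :
    ∃ (J : ℕ) (P : ℕ → Set X), (∀ j, MeasurableSet (P j)) ∧ Pairwise (Disjoint on P) ∧
      (∀ j, μ (P j) ≤ δ) ∧ μ (⋃ j ∈ Finset.range J, P j)ᶜ ≤ η := by
  obtain ⟨B, hBm, hBμ, hBU⟩ : ∃ B : ℕ → Set X,
      (∀ n, MeasurableSet (B n)) ∧ (∀ n, μ (B n) ≤ δ) ∧ ⋃ n, B n = Set.univ := by
    rcases isEmpty_or_nonempty X with hX | hX
    · exact ⟨fun _ => ∅, fun _ => .empty, fun _ => by simp, Subsingleton.elim _ _⟩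
    choose r hr hrμ using fun x => exists_pos_measure_closedBall_lt μ x hδ
    obtain ⟨s, hsc, hsU⟩ := TopologicalSpace.countable_cover_nhds
      fun x => closedBall_mem_nhds x (hr x)
    obtain ⟨u, rfl⟩ := hsc.exists_eq_range <| by
      obtain ⟨x⟩ := hX
      obtain ⟨y, hy, -⟩ := Set.mem_iUnion₂.1 (hsU ▸ Set.mem_univ x)
      exact ⟨y, hy⟩
    exact ⟨fun n => closedBall (u n) (r (u n)), fun n => measurableSet_closedBall,
      fun n => (hrμ _).le, by simpa using hsU⟩
  set S : ℕ → Set X := fun J => ⋃ j ∈ Finset.range J, disjointed B j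
  have hS : Tendsto (fun J => μ (S J)ᶜ) atTop (𝓝 0) := by
    have hSU : ⋃ J, S J = Set.univ := by
      refine Set.eq_univ_of_forall fun x => ?_
      obtain ⟨n, hn⟩ := Set.mem_iUnion.1 ((iUnion_disjointed.trans hBU).symm ▸ Set.mem_univ x)
      exact Set.mem_iUnion.2 ⟨n + 1, Set.mem_biUnion (Finset.mem_range.2 n.lt_succ_self) hn⟩
    have := tendsto_measure_iInter_atTop (μ := μ) (s := fun J => (S J)ᶜ)
      (fun J => (Finset.measurableSet_biUnion _ fun j _ =>
        MeasurableSet.disjointed hBm j).compl.nullMeasurableSet)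
      (fun a b hab => Set.compl_subset_compl.2
        (Set.biUnion_subset_biUnion_left (by simpa using hab)))
      ⟨0, measure_ne_top _ _⟩
    rwa [← Set.compl_iUnion, hSU, Set.compl_univ, measure_empty] at this
  obtain ⟨J, hJ⟩ := (hS.eventually (ge_mem_nhds hη)).exists
  exact ⟨J, disjointed B, .disjointed hBm, disjoint_disjointed B,
    fun j => (measure_mono (disjointed_subset B j)).trans (hBμ j), hJ⟩

end FinePartition

section SetIntegral

variable {X E : Type*} [MeasurableSpace X] [NormedAddCommGroup E] {μ : Measure X} {H : X → E}

theorem norm_setIntegral_le_measureReal_withDensity [NormedSpace ℝ E]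
    (hH : AEStronglyMeasurable H μ) {A : Set X} (hA : MeasurableSet A) :
    ‖∫ x in A, H x ∂μ‖ ≤ (μ.withDensity fun x => ‖H x‖ₑ).real A := by
  rw [measureReal_def, withDensity_apply _ hA, ← integral_norm_eq_lintegral_enorm hH.restrict]
  exact norm_integral_le_integral_norm _

theorem exists_disjoint_union_eq_norm_setIntegral_sub_sq_le [InnerProductSpace ℝ E]
    {ι : Type*} [DecidableEq ι] (hH : Integrable H μ) {P : ι → Set X}
    (hPm : ∀ j, MeasurableSet (P j)) (hPd : Pairwise (Disjoint on P)) {δ : ℝ}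
    (hPδ : ∀ j, (μ.withDensity fun x => ‖H x‖ₑ).real (P j) ≤ δ) (s : Finset ι) :
    ∃ T₀ T₁, MeasurableSet T₀ ∧ MeasurableSet T₁ ∧ Disjoint T₀ T₁ ∧ T₀ ∪ T₁ = ⋃ j ∈ s, P j ∧
      ‖∫ x in T₀, H x ∂μ - ∫ x in T₁, H x ∂μ‖ ^ 2 ≤
        δ * (μ.withDensity fun x => ‖H x‖ₑ).real (⋃ j ∈ s, P j) := by
  have : IsFiniteMeasure (μ.withDensity fun x => ‖H x‖ₑ) :=
    isFiniteMeasure_withDensity hH.hasFiniteIntegral.ne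
  have hint : ∀ u : Finset ι, ∫ x in ⋃ j ∈ u, P j, H x ∂μ = ∑ j ∈ u, ∫ x in P j, H x ∂μ :=
    fun u => integral_biUnion_finset u (fun j _ => hPm j) (hPd.set_pairwise _)
      fun j _ => hH.integrableOn
  obtain ⟨t, hts, ht⟩ := s.exists_subset_norm_sum_sub_sum_sdiff_sq_le fun j => ∫ x in P j, H x ∂μ
  refine ⟨⋃ j ∈ t, P j, ⋃ j ∈ s \ t, P j, t.measurableSet_biUnion fun j _ => hPm j,
    (s \ t).measurableSet_biUnion fun j _ => hPm j, ?_, ?_, ?_⟩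
  · exact Set.disjoint_iUnion₂_left.2 fun i hi => Set.disjoint_iUnion₂_right.2 fun j hj =>
      hPd fun hij => (Finset.mem_sdiff.1 hj).2 (hij ▸ hi)
  · rw [← Finset.set_biUnion_union, Finset.union_sdiff_of_subset hts]
  rw [hint, hint, measureReal_biUnion_finset (hPd.set_pairwise _) fun j _ => hPm j,
    Finset.mul_sum]
  refine ht.trans (Finset.sum_le_sum fun j _ => ?_)
  have hj := norm_setIntegral_le_measureReal_withDensity hH.aestronglyMeasurable (hPm j)
  nlinarith [norm_nonneg (∫ x in P j, H x ∂μ), hPδ j]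

theorem exists_disjoint_measurableSet_norm_setIntegral_sub_half_le [MetricSpace X]
    [SecondCountableTopology X] [OpensMeasurableSpace X] [NullSingletonClass μ]
    [InnerProductSpace ℝ E] (hH : Integrable H μ) {ε : ℝ} (hε : 0 < ε) :
    ∃ T : Fin 2 → Set X, (∀ k, MeasurableSet (T k)) ∧ Disjoint (T 0) (T 1) ∧
      ∀ k, ‖∫ x in T k, H x ∂μ - (2⁻¹ : ℝ) • ∫ x, H x ∂μ‖ ≤ ε := by
  set ν := μ.withDensity fun x => ‖H x‖ₑ
  have : IsFiniteMeasure ν := isFiniteMeasure_withDensity hH.hasFiniteIntegral.ne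
  -- chosen so that `δ * ν univ ≤ ε ^ 2`
  set δ := ε ^ 2 / (ν.real Set.univ + 1)
  obtain ⟨J, P, hPm, hPd, hPδ, hR⟩ := exists_pairwise_disjoint_measure_le_measure_compl_biUnion_le ν
    (ENNReal.ofReal_pos.2 (by positivity : 0 < δ)) (ENNReal.ofReal_pos.2 hε)
  obtain ⟨T₀, T₁, hT₀, hT₁, hT, hTU, hTδ⟩ := exists_disjoint_union_eq_norm_setIntegral_sub_sq_le hH
    hPm hPd (fun j => ENNReal.toReal_le_of_le_ofReal (by positivity) (hPδ j)) (Finset.range J)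
  set R := (⋃ j ∈ Finset.range J, P j)ᶜ
  have hRm : MeasurableSet R := ((Finset.range J).measurableSet_biUnion fun j _ => hPm j).compl
  have hsplit : ∫ x, H x ∂μ = ∫ x in T₀, H x ∂μ + ∫ x in T₁, H x ∂μ + ∫ x in R, H x ∂μ := by
    rw [← setIntegral_union hT hT₁ hH.integrableOn hH.integrableOn, hTU,
      integral_add_compl hRm.of_compl hH]
  have hbal : ‖∫ x in T₀, H x ∂μ - ∫ x in T₁, H x ∂μ‖ ≤ ε := by
    refine (pow_le_pow_iff_left₀ (norm_nonneg _) hε.le two_ne_zero).1 (hTδ.trans ?_)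
    calc δ * ν.real (⋃ j ∈ Finset.range J, P j) ≤ δ * (ν.real Set.univ + 1) := by
          gcongr
          linarith [measureReal_mono (μ := ν) (Set.subset_univ (⋃ j ∈ Finset.range J, P j))]
      _ = ε ^ 2 := div_mul_cancel₀ _ (by positivity)
  have hrem : ‖∫ x in R, H x ∂μ‖ ≤ ε :=
    (norm_setIntegral_le_measureReal_withDensity hH.aestronglyMeasurable hRm).trans
      (ENNReal.toReal_le_of_le_ofReal hε.le hR)
  have hhalf : ∀ a b : E, ‖a - b‖ ≤ ε → ‖a - (2⁻¹ : ℝ) • (a + b + ∫ x in R, H x ∂μ)‖ ≤ ε := by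
    intro a b hab
    rw [show a - (2⁻¹ : ℝ) • (a + b + ∫ x in R, H x ∂μ) =
      (2⁻¹ : ℝ) • (a - b) - (2⁻¹ : ℝ) • ∫ x in R, H x ∂μ by module]
    refine (norm_sub_le _ _).trans ?_
    rw [norm_smul, norm_smul, Real.norm_of_nonneg (by norm_num)]
    linarith
  refine ⟨![T₀, T₁], Fin.forall_fin_two.2 ⟨hT₀, hT₁⟩, hT, Fin.forall_fin_two.2 ⟨?_, ?_⟩⟩
  · show ‖∫ x in T₀, H x ∂μ - _‖ ≤ ε
    rw [hsplit]
    exact hhalf _ _ hbal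
  · show ‖∫ x in T₁, H x ∂μ - _‖ ≤ ε
    rw [hsplit, add_comm (∫ x in T₀, H x ∂μ)]
    exact hhalf _ _ ((norm_sub_rev _ _).trans_le hbal)

theorem exists_isCompact_subset_norm_setIntegral_sub_le [TopologicalSpace X] [PolishSpace X]
    [BorelSpace X] [NormedSpace ℝ E] (hH : Integrable H μ) {A : Set X} (hA : MeasurableSet A)
    {ε : ℝ} (hε : 0 < ε) :
    ∃ K ⊆ A, IsCompact K ∧ ‖∫ x in K, H x ∂μ - ∫ x in A, H x ∂μ‖ ≤ ε := by
  have : IsFiniteMeasure (μ.withDensity fun x => ‖H x‖ₑ) :=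
    isFiniteMeasure_withDensity hH.hasFiniteIntegral.ne
  obtain ⟨K, hKA, hK, hAK⟩ := hA.exists_isCompact_sdiff_lt
    (μ := μ.withDensity fun x => ‖H x‖ₑ) (measure_ne_top _ A) (ENNReal.ofReal_pos.2 hε).ne'
  refine ⟨K, hKA, hK, ?_⟩
  rw [norm_sub_rev, ← setIntegral_sdiff hK.measurableSet hH.integrableOn hKA]
  exact (norm_setIntegral_le_measureReal_withDensity hH.aestronglyMeasurable
    (hA.diff hK.measurableSet)).trans (ENNReal.toReal_le_of_le_ofReal hε.le hAK.le)

theorem exists_disjoint_isCompact_norm_setIntegral_sub_half_le [MetricSpace X] [CompleteSpace X]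
    [SecondCountableTopology X] [BorelSpace X] [NullSingletonClass μ]
    [InnerProductSpace ℝ E] (hH : Integrable H μ) {ε : ℝ} (hε : 0 < ε) :
    ∃ K : Fin 2 → Set X, (∀ k, IsCompact (K k)) ∧ Disjoint (K 0) (K 1) ∧
      ∀ k, ‖∫ x in K k, H x ∂μ - (2⁻¹ : ℝ) • ∫ x, H x ∂μ‖ ≤ ε := by
  obtain ⟨T, hTm, hT, hTH⟩ := exists_disjoint_measurableSet_norm_setIntegral_sub_half_le hH
    (half_pos hε)
  choose K hKT hK hKH using fun k =>
    exists_isCompact_subset_norm_setIntegral_sub_le hH (hTm k) (half_pos hε)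
  refine ⟨K, hK, hT.mono (hKT 0) (hKT 1), fun k => ?_⟩
  calc ‖∫ x in K k, H x ∂μ - (2⁻¹ : ℝ) • ∫ x, H x ∂μ‖
      ≤ ‖∫ x in K k, H x ∂μ - ∫ x in T k, H x ∂μ‖ +
        ‖∫ x in T k, H x ∂μ - (2⁻¹ : ℝ) • ∫ x, H x ∂μ‖ := norm_sub_le_norm_sub_add_norm_sub _ _ _
    _ ≤ ε / 2 + ε / 2 := add_le_add (hKH k) (hTH k)
    _ = ε := add_halves ε

theorem lipschitzWith_one_setIntegral_L1 [NormedSpace ℝ E] (S : Set X) :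
    LipschitzWith 1 fun g : Lp E 1 μ => ∫ x in S, g x ∂μ := by
  refine LipschitzWith.of_dist_le_mul fun g h => ?_
  rw [NNReal.coe_one, one_mul, dist_eq_norm, ← integral_sub (L1.integrable_coeFn g).integrableOn
    (L1.integrable_coeFn h).integrableOn, L1.dist_eq_integral_dist]
  refine (norm_integral_le_integral_norm _).trans ?_
  simp_rw [dist_eq_norm]
  exact setIntegral_le_integral ((L1.integrable_coeFn g).sub (L1.integrable_coeFn h)).norm
    (Eventually.of_forall fun x => norm_nonneg _)

theorem MeasureTheory.Integrable.tendsto_setIntegral_of_denseRange [NormedSpace ℝ E] {ι : Type*}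
    {l : Filter ι} {S : ι → Set X} {c : ℝ} {d : ℕ → Lp E 1 μ} (hd : DenseRange d)
    (hdS : ∀ i, Tendsto (fun n => ∫ x in S n, d i x ∂μ) l (𝓝 (c • ∫ x, d i x ∂μ)))
    (hH : Integrable H μ) :
    Tendsto (fun n => ∫ x in S n, H x ∂μ) l (𝓝 (c • ∫ x, H x ∂μ)) := by
  have hequi := (LipschitzWith.uniformEquicontinuous _ 1 fun n =>
    lipschitzWith_one_setIntegral_L1 (μ := μ) (E := E) (S n)).equicontinuous
  have hclosed := hequi.isClosed_setOfPred_tendsto (l := l) (continuous_integral.const_smul c)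
  have hH' := closure_minimal (Set.range_subset_iff.2 hdS) hclosed (hd (hH.toL1 H))
  have hrestrict : ∀ s, ∫ x in s, hH.toL1 H x ∂μ = ∫ x in s, H x ∂μ :=
    fun s => integral_congr_ae (ae_restrict_of_ae hH.coeFn_toL1)
  simpa only [Set.mem_ofPred_eq, Pi.smul_apply, hrestrict, integral_congr_ae hH.coeFn_toL1]
    using hH'

theorem tendsto_toReal_eLpNorm_indicator {ι : Type*} {l : Filter ι} {S : ι → Set X}
    (hS : ∀ n, MeasurableSet (S n)) {c : ℝ} (hc : 0 ≤ c)
    (hSc : ∀ g : X → ℝ, Integrable g μ →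
      Tendsto (fun n => ∫ x in S n, g x ∂μ) l (𝓝 (c * ∫ x, g x ∂μ)))
    {p : ℝ≥0∞} (hp0 : p ≠ 0) (hpt : p ≠ ∞) (hH : MemLp H p μ) :
    Tendsto (fun n => (eLpNorm ((S n).indicator H) p μ).toReal) l
      (𝓝 (c ^ p.toReal⁻¹ * (eLpNorm H p μ).toReal)) := by
  have hnorm : ∀ ν : Measure X, AEStronglyMeasurable H ν →
      (eLpNorm H p ν).toReal = (∫ x, ‖H x‖ ^ p.toReal ∂ν) ^ p.toReal⁻¹ := fun ν hν => by
    rw [toReal_eLpNorm hν, lpNorm_eq_integral_norm_rpow_toReal hp0 hpt hν]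
  refine Tendsto.congr (fun n => by
    rw [eLpNorm_indicator_eq_eLpNorm_restrict (hS n), hnorm _ hH.1.restrict]) ?_
  rw [hnorm μ hH.1, ← Real.mul_rpow hc (integral_nonneg fun x => by positivity)]
  exact (hSc _ (hH.integrable_norm_rpow hp0 hpt)).rpow_const (Or.inr (by positivity))

end SetIntegral

theorem exists_seq_disjoint_isCompact_tendsto_setIntegral_half {X F : Type*} [MetricSpace X]
    [CompleteSpace X] [SecondCountableTopology X] [MeasurableSpace X] [BorelSpace X]
    [NormedAddCommGroup F] [InnerProductSpace ℝ F] [CompleteSpace F] [SecondCountableTopology F]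
    (μ : Measure X) [SFinite μ] [NullSingletonClass μ] :
    ∃ K : ℕ → Fin 2 → Set X, (∀ n k, IsCompact (K n k)) ∧ (∀ n, Disjoint (K n 0) (K n 1)) ∧
      ∀ k (f : X → F), Integrable f μ →
        Tendsto (fun n => ∫ x in K n k, f x ∂μ) atTop (𝓝 ((2⁻¹ : ℝ) • ∫ x, f x ∂μ)) := by
  have : Fact ((1 : ℝ≥0∞) ≠ ∞) := ⟨one_ne_top⟩
  obtain ⟨d, hd⟩ := TopologicalSpace.exists_dense_seq (Lp F 1 μ)
  -- `e n` bundles the first `n` terms of `d` into one function valued in a Hilbert space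
  let e : ∀ n, (Fin n → F) ≃L[ℝ] PiLp 2 fun _ : Fin n => F := fun n =>
    (PiLp.continuousLinearEquiv 2 ℝ fun _ : Fin n => F).symm
  have hdint : ∀ i, Integrable (d i) μ := fun i => L1.integrable_coeFn (d i)
  have hHint : ∀ n, Integrable (fun x => e n fun i : Fin n => d i x) μ := fun n =>
    (e n).integrable_comp_iff.2 (Integrable.of_eval fun i => hdint i)
  choose K hKc hKd hKH using fun n : ℕ => exists_disjoint_isCompact_norm_setIntegral_sub_half_le
    (hHint n) (Nat.one_div_pos_of_nat (α := ℝ) (n := n))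
  refine ⟨K, hKc, hKd, fun k f hf => hf.tendsto_setIntegral_of_denseRange hd fun i => ?_⟩
  refine tendsto_iff_norm_sub_tendsto_zero.2 <| squeeze_zero' (.of_forall fun n => norm_nonneg _)
    (eventually_atTop.2 ⟨i + 1, fun n hin => ?_⟩) tendsto_one_div_add_atTop_nhds_zero_nat
  refine le_trans (le_of_eq ?_) ((PiLp.norm_apply_le _ ⟨i, hin⟩).trans (hKH n k))
  rw [(e n).integral_comp_comm, (e n).integral_comp_comm]
  simp only [e, PiLp.continuousLinearEquiv_symm_apply, PiLp.sub_apply, PiLp.smul_apply]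
  rw [eval_integral (f := fun x (j : Fin n) => d j x) (fun j => (hdint j).restrict),
    eval_integral (f := fun x (j : Fin n) => d j x) fun j => hdint j]

theorem separated_partition_of_unity_general
    {N : ℕ} (σ : Measure (Euc N)) [IsLocallyFiniteMeasure σ]
    (hna : ∀ x : Euc N, σ {x} = 0) :
    ∃ E : ℕ → Fin 2 → Set (Euc N),
      (∀ n k, MeasurableSet (E n k)) ∧
      (∀ n, ∃ a > (0 : ℝ), ∀ x ∈ E n 0, ∀ y ∈ E n 1, a ≤ dist x y) ∧
      (∀ k : Fin 2, ∀ f g : Euc N → ℂ, MemLp f 2 σ → MemLp g 2 σ →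
        Tendsto (fun n => ∫ x in E n k, f x * (starRingEnd ℂ) (g x) ∂σ) atTop
          (𝓝 ((1 / 2 : ℂ) * ∫ x, f x * (starRingEnd ℂ) (g x) ∂σ))) ∧
      (∀ p : ℝ, 1 ≤ p → ∀ k : Fin 2, ∀ f : Euc N → ℂ,
        MemLp f (ENNReal.ofReal p) σ →
        Tendsto
          (fun n => (eLpNorm ((E n k).indicator f) (ENNReal.ofReal p) σ).toReal)
          atTop
          (𝓝 ((2 : ℝ) ^ (-(1 / p)) * (eLpNorm f (ENNReal.ofReal p) σ).toReal))) := by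
  have : NullSingletonClass σ := ⟨hna⟩
  obtain ⟨K, hKc, hKd, hK⟩ := exists_seq_disjoint_isCompact_tendsto_setIntegral_half (F := ℂ) σ
  have hKℂ : ∀ k (f : Euc N → ℂ), Integrable f σ →
      Tendsto (fun n => ∫ x in K n k, f x ∂σ) atTop (𝓝 ((1 / 2 : ℂ) * ∫ x, f x ∂σ)) := by
    intro k f hf
    simpa [Complex.real_smul] using hK k f hf
  have hKℝ : ∀ k (g : Euc N → ℝ), Integrable g σ →
      Tendsto (fun n => ∫ x in K n k, g x ∂σ) atTop (𝓝 (2⁻¹ * ∫ x, g x ∂σ)) := by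
    intro k g hg
    have h := hKℂ k (fun x => (g x : ℂ)) hg.ofReal
    simp only [integral_complex_ofReal] at h
    exact tendsto_ofReal_iff.1 (by push_cast; simpa using h)
  refine ⟨K, fun n k => (hKc n k).measurableSet,
    fun n => (hKc n 0).exists_pos_le_dist_of_disjoint (hKc n 1).isClosed (hKd n),
    fun k f g hf hg => hKℂ k _ (hf.integrable_mul hg.star), fun p hp k f hf => ?_⟩
  have hp0 : 0 < p := zero_lt_one.trans_le hp
  have := tendsto_toReal_eLpNorm_indicator (fun n => (hKc n k).measurableSet) (by norm_num)
    (hKℝ k) (by simpa using hp0) ofReal_ne_top hf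
  rwa [toReal_ofReal hp0.le, Real.inv_rpow zero_le_two, ← Real.rpow_neg zero_le_two,
    ← one_div] at this

/-- separated partitions of unity for an atomless Radon measure. -/
theorem separated_partition_of_unity
    {N : ℕ} (σ : Measure (Euc N)) [IsLocallyFiniteMeasure σ] [σ.InnerRegular]
    (hna : ∀ x : Euc N, σ {x} = 0) :
    ∃ E : ℕ → Fin 2 → Set (Euc N),
      (∀ n k, MeasurableSet (E n k)) ∧
      (∀ n, ∃ a > (0 : ℝ), ∀ x ∈ E n 0, ∀ y ∈ E n 1, a ≤ dist x y) ∧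
      (∀ k : Fin 2, ∀ f g : Euc N → ℂ, MemLp f 2 σ → MemLp g 2 σ →
        Tendsto (fun n => ∫ x in E n k, f x * (starRingEnd ℂ) (g x) ∂σ) atTop
          (𝓝 ((1 / 2 : ℂ) * ∫ x, f x * (starRingEnd ℂ) (g x) ∂σ))) ∧
      (∀ p : ℝ, 1 ≤ p → ∀ k : Fin 2, ∀ f : Euc N → ℂ,
        MemLp f (ENNReal.ofReal p) σ →
        Tendsto
          (fun n => (eLpNorm ((E n k).indicator f) (ENNReal.ofReal p) σ).toReal)
          atTop
          (𝓝 ((2 : ℝ) ^ (-(1 / p)) * (eLpNorm f (ENNReal.ofReal p) σ).toReal))) :=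
  separated_partition_of_unity_general σ hna
end
end

section
/- Let μ and ν be Radon measures on ℝ^N without common atoms. For f ∈ L^p(μ) write f = f_c + f_a, where f_a := f·1_{A_μ} with A_μ = {x : μ({x}) > 0} (the purely atomic part of f) and f_c := f − f_a; define the analogous decomposition g = g_c + g_a for g ∈ L^p(ν) using A_ν = {x : ν({x}) > 0}. Then there exist sequences of Borel sets E_n^1, E_n^2 ⊆ ℝ^N such that: (1) for every n, dist(E_n^1, E_n^2) > 0; (2) the operators P_n^1 f := 1_{E_n^1}(f_c + (1/2) f_a) converge to (1/2)·I in the weak operator topology of L²(μ), i.e. ∫ (P_n^1 f) \overline{h} dμ → (1/2) ∫ f \overline{h} dμ for all f, h ∈ L²(μ), and similarly the operators P_n^2 g := 1_{E_n^2}(g_c + (1/2) g_a) converge to (1/2)·I in the weak operator topology of L²(ν); (3) for every p ∈ [1,∞), limsup_{n→∞} ‖P_n^1 f‖_{L^p(μ)} ≤ 2^{−1/p} ‖f‖_{L^p(μ)} for every f ∈ L^p(μ), and limsup_{n→∞} ‖P_n^2 g‖_{L^p(ν)} ≤ 2^{−1/p} ‖g‖_{L^p(ν)} for every g ∈ L^p(ν).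 -/
open MeasureTheory Filter Metric Complex Topology ENNReal

noncomputable section

/-- `f_c + (1/2) f_a`: the function whose purely atomic part (w.r.t. `μ`) is halved. -/
def halved {N : ℕ} (μ : Measure (Euc N)) (f : Euc N → ℂ) : Euc N → ℂ :=
  fun x => if 0 < μ {x} then (1 / 2 : ℂ) * f x else f x

/-!
The atoms of `μ` and of `ν` are countable; removing them leaves atomless measures `μ_c`, `ν_c`,
and `σ = μ_c + ν_c` is atomless too. By Fubini some direction `ℓ` makes every hyperplane
`{⟪ℓ, x⟫ = t}` `σ`-null, so the image of `σ` on the line is atomless, its distribution function `G`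
is continuous, and `Φ = G ∘ ⟪ℓ, ·⟫` is uniformly continuous and pushes `σ` to Lebesgue measure on
an interval. Alternating blocks of length `ε - ε²` separated by gaps `ε²` have asymptotic density
`1/2` for Lebesgue measure (checked on half-lines, then by Dynkin's π-λ theorem), hence so do
their preimages under `Φ` for every measure `≪ σ`; density of simple functions in `L¹` turns this
into `∫_{F n} w → (1/2) ∫ w`. Uniform continuity keeps the preimages of even and of odd blocks at
positive distance.

`E₁ n` is the preimage of the even blocks plus the first `n` atoms of `μ`, `E₂ n` that of the odd
blocks plus the first `n` atoms of `ν`, both with a thin neighbourhood of these finitely many atoms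
removed. Since `μ` and `ν` share no atom, `E₁ n` and `E₂ n` stay at positive distance; the removed
neighbourhoods are `σ`-negligible in the limit, and on the atoms `1_{E n} → 1` compensates the
factor `1/2` in `halved`.
-/

open Set

section AsymptoticDensity

variable {α : Type*} [MeasurableSpace α]

def HasAsymptoticDensity (κ : Measure α) (F : ℕ → Set α) (θ : ℝ) : Prop :=
  ∀ s, MeasurableSet s → κ s < ∞ → Tendsto (fun n => κ.real (F n ∩ s)) atTop (𝓝 (θ * κ.real s))

variable {κ : Measure α} {F : ℕ → Set α} {θ : ℝ}

theorem HasAsymptoticDensity.of_isPiSystem [IsFiniteMeasure κ] {S : Set (Set α)}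
    (hgen : ‹MeasurableSpace α› = MeasurableSpace.generateFrom S) (hS : IsPiSystem S)
    (hF : ∀ n, MeasurableSet (F n))
    (huniv : Tendsto (fun n => κ.real (F n)) atTop (𝓝 (θ * κ.real univ)))
    (hbase : ∀ s ∈ S, Tendsto (fun n => κ.real (F n ∩ s)) atTop (𝓝 (θ * κ.real s))) :
    HasAsymptoticDensity κ F θ := by
  rintro s hs -
  induction s, hs using MeasurableSpace.induction_on_inter hgen hS with
  | empty => simp
  | basic t ht => exact hbase t ht
  | compl t ht iht =>
    have hsplit (n : ℕ) : κ.real (F n ∩ tᶜ) = κ.real (F n) - κ.real (F n ∩ t) := by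
      rw [← measureReal_inter_add_sdiff ht (s := F n), sdiff_eq]; ring
    rw [measureReal_compl ht, mul_sub]
    simpa only [hsplit] using huniv.sub iht
  | iUnion f hdisj hf ihf =>
    have hsum (n : ℕ) : κ.real (F n ∩ ⋃ i, f i) = ∑' i, κ.real (F n ∩ f i) := by
      rw [inter_iUnion, measureReal_def, measure_iUnion (fun i j hij =>
        (hdisj hij).mono inter_subset_right inter_subset_right) fun i => (hF n).inter (hf i),
        ENNReal.tsum_toReal_eq fun i => measure_ne_top _ _]
      rfl
    have hlim : κ.real (⋃ i, f i) = ∑' i, κ.real (f i) := by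
      rw [measureReal_def, measure_iUnion hdisj hf,
        ENNReal.tsum_toReal_eq fun i => measure_ne_top _ _]
      rfl
    simp_rw [hsum, hlim, ← tsum_mul_left]
    refine tendsto_tsum_of_dominated_convergence (bound := fun i => κ.real (f i)) ?_ ihf ?_
    · exact ENNReal.summable_toReal (by rw [← measure_iUnion hdisj hf]; exact measure_ne_top _ _)
    · exact Eventually.of_forall fun n i => by
        rw [Real.norm_of_nonneg measureReal_nonneg]
        exact measureReal_mono inter_subset_right

theorem dist_setIntegral_le_dist {V : Type*} [NormedAddCommGroup V] [NormedSpace ℝ V]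
    (s : Set α) (f g : α →₁[κ] V) :
    dist (∫ x in s, f x ∂κ) (∫ x in s, g x ∂κ) ≤ dist f g := by
  rw [dist_eq_norm, dist_eq_norm, ← integral_sub (L1.integrable_coeFn f).integrableOn
    (L1.integrable_coeFn g).integrableOn, L1.norm_eq_integral_norm]
  calc ‖∫ x in s, (f x - g x) ∂κ‖ ≤ ∫ x in s, ‖f x - g x‖ ∂κ := norm_integral_le_integral_norm _
    _ ≤ ∫ x, ‖f x - g x‖ ∂κ :=
      setIntegral_le_integral ((L1.integrable_coeFn f).sub (L1.integrable_coeFn g)).norm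
        (Eventually.of_forall fun _ => norm_nonneg _)
    _ = ∫ x, ‖(f - g) x‖ ∂κ :=
      integral_congr_ae ((Lp.coeFn_sub f g).mono fun x hx => by simp only [hx, Pi.sub_apply])

theorem HasAsymptoticDensity.tendsto_setIntegral (h : HasAsymptoticDensity κ F θ)
    {V : Type*} [NormedAddCommGroup V] [NormedSpace ℝ V] [CompleteSpace V]
    {w : α → V} (hw : Integrable w κ) :
    Tendsto (fun n => ∫ x in F n, w x ∂κ) atTop (𝓝 (θ • ∫ x, w x ∂κ)) := by
  refine Integrable.induction (fun w => Tendsto (fun n => ∫ x in F n, w x ∂κ) atTop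
    (𝓝 (θ • ∫ x, w x ∂κ))) ?_ ?_ ?_ ?_ hw
  · intro c s hs hsκ
    simp only [setIntegral_indicator hs, setIntegral_const, integral_indicator_const c hs,
      smul_smul]
    exact (h s hs hsκ).smul_const c
  · intro f g _ hf hg ihf ihg
    simp only [Pi.add_apply, integral_add hf.integrableOn hg.integrableOn, integral_add hf hg,
      smul_add]
    exact ihf.add ihg
  · exact ((LipschitzWith.uniformEquicontinuous _ 1 fun n => LipschitzWith.of_dist_le_mul
      fun f g => by simpa using dist_setIntegral_le_dist (F n) f g).equicontinuous
      ).isClosed_setOfPred_tendsto (continuous_const.smul continuous_integral)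
  · intro f g hfg _ ihf
    simpa only [integral_congr_ae hfg, integral_congr_ae (ae_restrict_of_ae hfg)] using ihf

theorem HasAsymptoticDensity.tendsto_measureReal [SigmaFinite κ] (h : HasAsymptoticDensity κ F θ)
    {ρ : Measure α} [IsFiniteMeasure ρ] (hρ : ρ ≪ κ) :
    Tendsto (fun n => ρ.real (F n)) atTop (𝓝 (θ * ρ.real univ)) := by
  have := h.tendsto_setIntegral (Measure.integrable_toReal_rnDeriv (μ := ρ) (ν := κ))
  rwa [Measure.integral_toReal_rnDeriv hρ, smul_eq_mul,
    funext fun n => Measure.setIntegral_toReal_rnDeriv hρ (F n)] at this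

theorem HasAsymptoticDensity.preimage [SigmaFinite κ] (h : HasAsymptoticDensity κ F θ)
    (hF : ∀ n, MeasurableSet (F n)) {β : Type*} [MeasurableSpace β] {τ : Measure β}
    {φ : β → α} (hφ : Measurable φ) (hτ : τ.map φ ≪ κ) :
    HasAsymptoticDensity τ (fun n => φ ⁻¹' F n) θ := by
  intro s hs hτs
  have : IsFiniteMeasure (τ.restrict s) := isFiniteMeasure_restrict.2 hτs.ne
  have hρ : (τ.restrict s).map φ ≪ κ :=
    ((Measure.absolutelyContinuous_of_le Measure.restrict_le_self).map hφ).trans hτ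
  have := h.tendsto_measureReal hρ
  simpa only [map_measureReal_apply hφ (hF _), map_measureReal_apply hφ MeasurableSet.univ,
    measureReal_restrict_apply' hs, preimage_univ, univ_inter] using this

theorem tendsto_measureReal_of_absolutelyContinuous {ρ κ' : Measure α} [IsFiniteMeasure ρ]
    [IsFiniteMeasure κ'] (hρ : ρ ≪ κ') {B : ℕ → Set α}
    (hB : Tendsto (fun n => κ' (B n)) atTop (𝓝 0)) :
    Tendsto (fun n => ρ.real (B n)) atTop (𝓝 0) := by
  have := (Measure.integrable_toReal_rnDeriv (μ := ρ) (ν := κ')).tendsto_setIntegral_nhds_zero hB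
  simpa only [Measure.setIntegral_toReal_rnDeriv hρ] using this

theorem HasAsymptoticDensity.diff_union (h : HasAsymptoticDensity κ F θ) {κ' : Measure α}
    [IsFiniteMeasure κ'] (hκ : κ ≪ κ') {B Z : ℕ → Set α}
    (hB : Tendsto (fun n => κ' (B n)) atTop (𝓝 0)) (hZ : ∀ n, κ (Z n) = 0) :
    HasAsymptoticDensity κ (fun n => (F n \ B n) ∪ Z n) θ := by
  intro s hs hκs
  have : IsFiniteMeasure (κ.restrict s) := isFiniteMeasure_restrict.2 hκs.ne
  have hfin {t : Set α} (ht : t ⊆ s) : κ t ≠ ∞ := ((measure_mono ht).trans_lt hκs).ne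
  have hsmall : Tendsto (fun n => κ.real (B n ∩ s)) atTop (𝓝 0) := by
    simpa only [measureReal_restrict_apply' hs] using
      tendsto_measureReal_of_absolutelyContinuous (ρ := κ.restrict s)
        ((Measure.absolutelyContinuous_of_le Measure.restrict_le_self).trans hκ) hB
  refine tendsto_of_tendsto_of_tendsto_of_le_of_le (by simpa using (h s hs hκs).sub hsmall)
    (h s hs hκs) (fun n => ?_) (fun n => ?_)
  · have : F n ∩ s ⊆ ((F n \ B n) ∪ Z n) ∩ s ∪ B n ∩ s := by
      intro x ⟨hxF, hxs⟩
      by_cases hxB : x ∈ B n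
      exacts [Or.inr ⟨hxB, hxs⟩, Or.inl ⟨Or.inl ⟨hxF, hxB⟩, hxs⟩]
    have := (measureReal_mono this (hfin (union_subset inter_subset_right inter_subset_right))
      ).trans (measureReal_union_le _ _)
    linarith
  · calc κ.real (((F n \ B n) ∪ Z n) ∩ s) ≤ κ.real ((F n ∩ s) ∪ Z n) :=
          measureReal_mono (fun x ⟨hx, hxs⟩ => hx.elim (fun hx => Or.inl ⟨hx.1, hxs⟩) Or.inr)
            (measure_union_lt_top (hfin inter_subset_right).lt_top ((hZ n).trans_lt zero_lt_top)).ne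
      _ ≤ κ.real (F n ∩ s) + κ.real (Z n) := measureReal_union_le _ _
      _ = κ.real (F n ∩ s) := by simp [measureReal_def, hZ n]

end AsymptoticDensity

section Atoms

variable {α : Type*} [MeasurableSpace α] [MeasurableSingletonClass α]

def atoms (μ : Measure α) : Set α := {x | 0 < μ {x}}

theorem countable_atoms (μ : Measure α) [SigmaFinite μ] : (atoms μ).Countable := by
  simpa [atoms] using Measure.countable_meas_level_set_pos (μ := μ) measurable_id

theorem measurableSet_atoms (μ : Measure α) [SigmaFinite μ] : MeasurableSet (atoms μ) :=
  (countable_atoms μ).measurableSet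

instance (μ : Measure α) : NullSingletonClass (μ.restrict (atoms μ)ᶜ) where
  measure_singleton x := by
    rw [Measure.restrict_apply (measurableSet_singleton x)]
    by_cases hx : x ∈ atoms μ
    · simp [hx]
    · exact measure_mono_null inter_subset_left (nonpos_iff_eq_zero.1 (not_lt.1 hx))

structure IsHalvingSequence (μ : Measure α) (E : ℕ → Set α) : Prop where
  measurableSet : ∀ n, MeasurableSet (E n)
  hasAsymptoticDensity : HasAsymptoticDensity (μ.restrict (atoms μ)ᶜ) E 2⁻¹
  eventually_mem : ∀ x ∈ atoms μ, ∀ᶠ n in atTop, x ∈ E n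

theorem IsHalvingSequence.tendsto_setIntegral {μ : Measure α} [SigmaFinite μ] {E : ℕ → Set α}
    (hE : IsHalvingSequence μ E) {V : Type*} [NormedAddCommGroup V] [NormedSpace ℝ V]
    [CompleteSpace V] {φ : α → V} (hφ : Integrable φ μ) :
    Tendsto (fun n => ∫ x in E n, φ x ∂μ) atTop
      (𝓝 (∫ x in atoms μ, φ x ∂μ + (2⁻¹ : ℝ) • ∫ x in (atoms μ)ᶜ, φ x ∂μ)) := by
  have hA := measurableSet_atoms μ
  have hsplit (n : ℕ) : ∫ x in E n, φ x ∂μ =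
      ∫ x in atoms μ, (E n).indicator φ x ∂μ + ∫ x in E n, φ x ∂(μ.restrict (atoms μ)ᶜ) := by
    rw [← integral_indicator (hE.measurableSet n), ← integral_indicator (hE.measurableSet n),
      integral_add_compl hA (hφ.indicator (hE.measurableSet n))]
  simp only [hsplit]
  refine Tendsto.add ?_ (hE.hasAsymptoticDensity.tendsto_setIntegral hφ.restrict)
  refine tendsto_integral_of_dominated_convergence (fun x => ‖φ x‖)
    (fun n => (hφ.indicator (hE.measurableSet n)).aestronglyMeasurable.restrict)
    hφ.norm.restrict (fun n => Eventually.of_forall fun x => ?_) ?_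
  · rw [norm_indicator_eq_indicator_norm]
    exact indicator_le_self' (fun _ _ => norm_nonneg _) x
  · filter_upwards [ae_restrict_mem hA] with x hx
    exact tendsto_const_nhds.congr' ((hE.eventually_mem x hx).mono fun n hn =>
      (indicator_of_mem hn φ).symm)

theorem IsHalvingSequence.of_hasAsymptoticDensity {μ : Measure α} [SigmaFinite μ]
    {F B S : ℕ → Set α}
    (hF : HasAsymptoticDensity (μ.restrict (atoms μ)ᶜ) F 2⁻¹) (hFm : ∀ n, MeasurableSet (F n))
    {κ : Measure α} [IsFiniteMeasure κ] (hκ : μ.restrict (atoms μ)ᶜ ≪ κ)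
    (hB : ∀ n, MeasurableSet (B n)) (hBκ : Tendsto (fun n => κ (B n)) atTop (𝓝 0))
    (hS : ∀ n, MeasurableSet (S n)) (hSA : ∀ n, S n ⊆ atoms μ)
    (hcover : ∀ x ∈ atoms μ, ∀ᶠ n in atTop, x ∈ S n) :
    IsHalvingSequence μ (fun n => (F n \ B n) ∪ S n) where
  measurableSet n := ((hFm n).diff (hB n)).union (hS n)
  hasAsymptoticDensity := hF.diff_union hκ hBκ fun n => measure_mono_null (hSA n) (by
    rw [Measure.restrict_apply' (measurableSet_atoms μ).compl, inter_compl_self, measure_empty])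
  eventually_mem x hx := (hcover x hx).mono fun _ hn => Or.inr hn

end Atoms

section HalvedFunctions

variable {N : ℕ} {μ : Measure (Euc N)}

theorem halved_of_mem {x : Euc N} (hx : x ∈ atoms μ) (f : Euc N → ℂ) :
    halved μ f x = (1 / 2 : ℂ) * f x := if_pos hx

theorem halved_of_notMem {x : Euc N} (hx : x ∉ atoms μ) (f : Euc N → ℂ) :
    halved μ f x = f x := if_neg hx

theorem norm_halved_le (f : Euc N → ℂ) (x : Euc N) : ‖halved μ f x‖ ≤ ‖f x‖ := by
  by_cases hx : x ∈ atoms μ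
  · rw [halved_of_mem hx, norm_mul]
    exact mul_le_of_le_one_left (norm_nonneg _) (by norm_num)
  · rw [halved_of_notMem hx]

theorem aestronglyMeasurable_halved [SigmaFinite μ] {f : Euc N → ℂ}
    (hf : AEStronglyMeasurable f μ) : AEStronglyMeasurable (halved μ f) μ := by
  classical
  have : halved μ f = (atoms μ).piecewise (fun x => (1 / 2 : ℂ) * f x) f := by
    funext x
    by_cases hx : x ∈ atoms μ
    · rw [halved_of_mem hx, piecewise_eq_of_mem _ _ _ hx]
    · rw [halved_of_notMem hx, piecewise_eq_of_notMem _ _ _ hx]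
  rw [this]
  exact AEStronglyMeasurable.piecewise (measurableSet_atoms μ) (hf.const_mul _).restrict hf.restrict

end HalvedFunctions

section HalvingConsequences

variable {N : ℕ} {μ : Measure (Euc N)} [SigmaFinite μ] {E : ℕ → Set (Euc N)}

theorem IsHalvingSequence.tendsto_integral_indicator_halved_mul_conj
    (hE : IsHalvingSequence μ E) {f h : Euc N → ℂ} (hf : MemLp f 2 μ) (hh : MemLp h 2 μ) :
    Tendsto (fun n => ∫ x, (E n).indicator (halved μ f) x * (starRingEnd ℂ) (h x) ∂μ) atTop
      (𝓝 ((1 / 2 : ℂ) * ∫ x, f x * (starRingEnd ℂ) (h x) ∂μ)) := by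
  set ψ : Euc N → ℂ := fun x => f x * (starRingEnd ℂ) (h x)
  have hψ : Integrable ψ μ := hf.integrable_mul hh.star
  have hφ : Integrable (fun x => halved μ f x * (starRingEnd ℂ) (h x)) μ :=
    hψ.mono ((aestronglyMeasurable_halved hf.1).mul hh.star.1) (Eventually.of_forall fun x => by
      simpa only [norm_mul, ψ] using
        mul_le_mul_of_nonneg_right (norm_halved_le f x) (norm_nonneg ((starRingEnd ℂ) (h x))))
  have hind (n : ℕ) : ∫ x, (E n).indicator (halved μ f) x * (starRingEnd ℂ) (h x) ∂μ =
      ∫ x in E n, halved μ f x * (starRingEnd ℂ) (h x) ∂μ := by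
    rw [← integral_indicator (hE.measurableSet n)]
    congr 1 with x
    by_cases hx : x ∈ E n <;> simp [hx]
  have hA : ∫ x in atoms μ, halved μ f x * (starRingEnd ℂ) (h x) ∂μ =
      (2⁻¹ : ℝ) • ∫ x in atoms μ, ψ x ∂μ := by
    rw [← integral_smul]
    refine setIntegral_congr_fun (measurableSet_atoms μ) fun x hx => ?_
    simp only [halved_of_mem hx, ψ, Complex.real_smul]
    push_cast
    ring
  have hAc : ∫ x in (atoms μ)ᶜ, halved μ f x * (starRingEnd ℂ) (h x) ∂μ =
      ∫ x in (atoms μ)ᶜ, ψ x ∂μ :=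
    setIntegral_congr_fun (measurableSet_atoms μ).compl fun x hx => by
      simp only [halved_of_notMem hx, ψ]
  have hlim := hE.tendsto_setIntegral hφ
  rwa [hA, hAc, ← smul_add, integral_add_compl (measurableSet_atoms μ) hψ, Complex.real_smul,
    show ((2⁻¹ : ℝ) : ℂ) = 1 / 2 by norm_num, ← funext hind] at hlim

theorem toReal_eLpNorm_ofReal_eq {α : Type*} [MeasurableSpace α] {ν : Measure α} {g : α → ℂ}
    {p : ℝ} (hp : 0 < p) (hg : MemLp g (ENNReal.ofReal p) ν) :
    (eLpNorm g (ENNReal.ofReal p) ν).toReal = (∫ x, ‖g x‖ ^ p ∂ν) ^ (1 / p) := by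
  rw [hg.eLpNorm_eq_integral_rpow_norm (by simpa using hp) ofReal_ne_top,
    toReal_ofReal hp.le, toReal_ofReal (by positivity), one_div]

theorem IsHalvingSequence.limsup_eLpNorm_indicator_halved_le (hE : IsHalvingSequence μ E)
    {p : ℝ} (hp : 1 ≤ p) {f : Euc N → ℂ} (hf : MemLp f (ENNReal.ofReal p) μ) :
    limsup (fun n => (eLpNorm ((E n).indicator (halved μ f)) (ENNReal.ofReal p) μ).toReal)
      atTop ≤ (2 : ℝ) ^ (-(1 / p)) * (eLpNorm f (ENNReal.ofReal p) μ).toReal := by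
  have hp0 : 0 < p := by linarith
  have hfp : Integrable (fun x => ‖f x‖ ^ p) μ := by
    simpa [toReal_ofReal hp0.le] using
      hf.integrable_norm_rpow (by simpa using hp0) ofReal_ne_top
  have hφ_le (x : Euc N) : ‖halved μ f x‖ ^ p ≤ ‖f x‖ ^ p :=
    Real.rpow_le_rpow (norm_nonneg _) (norm_halved_le f x) hp0.le
  have hφ : Integrable (fun x => ‖halved μ f x‖ ^ p) μ :=
    hfp.mono ((aestronglyMeasurable_halved hf.1).norm.aemeasurable.pow_const p).aestronglyMeasurable
      (Eventually.of_forall fun x => by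
        rw [Real.norm_of_nonneg (by positivity), Real.norm_of_nonneg (by positivity)]
        exact hφ_le x)
  have hmem (n : ℕ) : MemLp ((E n).indicator (halved μ f)) (ENNReal.ofReal p) μ :=
    hf.of_le ((aestronglyMeasurable_halved hf.1).indicator (hE.measurableSet n))
      (Eventually.of_forall fun x => by
        rw [norm_indicator_eq_indicator_norm]
        exact (indicator_le_self' (fun _ _ => norm_nonneg _) x).trans (norm_halved_le f x))
  have hnorm (n : ℕ) : (eLpNorm ((E n).indicator (halved μ f)) (ENNReal.ofReal p) μ).toReal =
      (∫ x in E n, ‖halved μ f x‖ ^ p ∂μ) ^ (1 / p) := by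
    rw [toReal_eLpNorm_ofReal_eq hp0 (hmem n), ← integral_indicator (hE.measurableSet n)]
    congr 2 with x
    by_cases hx : x ∈ E n <;> simp [hx, Real.zero_rpow hp0.ne']
  have hA : ∫ x in atoms μ, ‖halved μ f x‖ ^ p ∂μ ≤ 2⁻¹ * ∫ x in atoms μ, ‖f x‖ ^ p ∂μ := by
    rw [← integral_const_mul]
    refine setIntegral_mono_on hφ.integrableOn (hfp.integrableOn.const_mul _)
      (measurableSet_atoms μ) fun x hx => ?_
    rw [halved_of_mem hx, norm_mul, Real.mul_rpow (norm_nonneg _) (norm_nonneg _)]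
    refine mul_le_mul_of_nonneg_right ?_ (by positivity)
    calc ‖(1 / 2 : ℂ)‖ ^ p ≤ ‖(1 / 2 : ℂ)‖ ^ (1 : ℝ) :=
          Real.rpow_le_rpow_of_exponent_ge (by norm_num) (by norm_num) hp
      _ = 2⁻¹ := by norm_num
  have hAc : ∫ x in (atoms μ)ᶜ, ‖halved μ f x‖ ^ p ∂μ ≤ ∫ x in (atoms μ)ᶜ, ‖f x‖ ^ p ∂μ :=
    setIntegral_mono hφ.integrableOn hfp.integrableOn hφ_le
  have hlim := (hE.tendsto_setIntegral hφ).rpow_const (p := 1 / p) (Or.inr (by positivity))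
  rw [funext hnorm, hlim.limsup_eq, toReal_eLpNorm_ofReal_eq hp0 hf,
    Real.rpow_neg zero_le_two, ← Real.inv_rpow zero_le_two,
    ← Real.mul_rpow (by norm_num) (integral_nonneg fun x => by positivity)]
  refine Real.rpow_le_rpow (add_nonneg (setIntegral_nonneg (measurableSet_atoms μ)
    fun x _ => by positivity) (smul_nonneg (by norm_num) (setIntegral_nonneg
    (measurableSet_atoms μ).compl fun x _ => by positivity))) ?_ (by positivity)
  rw [← integral_add_compl (measurableSet_atoms μ) hfp, smul_eq_mul]
  linarith

end HalvingConsequences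

section DistributionFunction

variable (m : Measure ℝ)

def distributionFunction (t : ℝ) : ℝ := m.real (Iic t)

theorem distributionFunction_nonneg (t : ℝ) : 0 ≤ distributionFunction m t := measureReal_nonneg

variable [IsFiniteMeasure m]

theorem monotone_distributionFunction : Monotone (distributionFunction m) :=
  fun _ _ hst => measureReal_mono (Iic_subset_Iic.2 hst)

theorem distributionFunction_le (t : ℝ) : distributionFunction m t ≤ m.real univ :=
  measureReal_mono (subset_univ _)

theorem tendsto_distributionFunction_atTop :
    Tendsto (distributionFunction m) atTop (𝓝 (m.real univ)) :=
  (ENNReal.tendsto_toReal (measure_ne_top m univ)).comp (tendsto_measure_Iic_atTop m)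

theorem tendsto_distributionFunction_atBot : Tendsto (distributionFunction m) atBot (𝓝 0) := by
  have h := tendsto_measure_iInter_atBot (μ := m) (s := Iic)
    (fun _ => measurableSet_Iic.nullMeasurableSet) (fun _ _ hst => Iic_subset_Iic.2 hst)
    ⟨0, measure_ne_top m _⟩
  have hempty : ⋂ t : ℝ, Iic t = ∅ :=
    eq_empty_of_forall_notMem fun x hx => absurd (mem_iInter.1 hx (x - 1)) (by simp)
  rw [hempty, measure_empty] at h
  exact (ENNReal.tendsto_toReal zero_ne_top).comp h

variable [NullSingletonClass m]

theorem continuous_distributionFunction : Continuous (distributionFunction m) := by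
  refine Metric.continuous_iff.2 fun t ε hε => ?_
  have h := tendsto_measure_thickening_of_isClosed (μ := m) (s := {t})
    ⟨1, one_pos, measure_ne_top _ _⟩ isClosed_singleton
  rw [measure_singleton] at h
  obtain ⟨r, hrε, hr⟩ :=
    ((h.eventually (gt_mem_nhds (ofReal_pos.2 hε))).and self_mem_nhdsWithin).exists
  refine ⟨r, hr, fun s hs => ?_⟩
  have hsub : symmDiff (Iic s) (Iic t) ⊆ ball t r := by
    rintro x (⟨hxs, hxt⟩ | ⟨hxt, hxs⟩) <;> simp only [mem_Iic, not_le] at * <;>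
      rw [mem_ball, Real.dist_eq, abs_lt] <;> rw [Real.dist_eq, abs_lt] at hs <;>
      constructor <;> linarith
  calc dist (distributionFunction m s) (distributionFunction m t)
      ≤ m.real (symmDiff (Iic s) (Iic t)) :=
        abs_measureReal_sub_le_measureReal_symmDiff measurableSet_Iic.nullMeasurableSet
          measurableSet_Iic.nullMeasurableSet
    _ ≤ m.real (ball t r) := measureReal_mono hsub
    _ < ε := by
      rw [← thickening_singleton, measureReal_def]
      exact (ENNReal.toReal_lt_toReal (measure_ne_top _ _) ofReal_ne_top).2 hrε |>.trans_eq
        (toReal_ofReal hε.le)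

theorem uniformContinuous_distributionFunction :
    UniformContinuous (distributionFunction m) := by
  -- subtracting `m.real univ` times a clamp leaves a function vanishing at both ends
  set clamp : ℝ → ℝ := fun t => max (min t 1) 0
  have hclamp : UniformContinuous clamp :=
    ((LipschitzWith.id.min_const 1).max_const 0).uniformContinuous
  have hlim : Tendsto (fun t => distributionFunction m t - m.real univ * clamp t) (cocompact ℝ)
      (𝓝 0) := by
    rw [cocompact_eq_atBot_atTop, tendsto_sup]
    constructor
    · refine (tendsto_distributionFunction_atBot m).congr' ?_
      filter_upwards [eventually_le_atBot 0] with t ht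
      simp [clamp, ht, ht.trans zero_le_one]
    · have := (tendsto_distributionFunction_atTop m).sub_const (m.real univ)
      rw [sub_self] at this
      refine this.congr' ?_
      filter_upwards [eventually_ge_atTop 1] with t ht
      simp [clamp, ht]
  simpa using (((continuous_distributionFunction m).sub
    (continuous_const.mul hclamp.continuous)).uniformContinuous_of_tendsto_cocompact hlim).add
    (hclamp.const_mul' (m.real univ))

theorem measure_distributionFunction_le {c : ℝ} (hc : 0 ≤ c) :
    m {t | distributionFunction m t ≤ c} = ENNReal.ofReal (min c (m.real univ)) := by
  set G := distributionFunction m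
  set S := {t | G t ≤ c}
  rcases le_or_gt (m.real univ) c with hMc | hcM
  · rw [min_eq_right hMc, show S = univ from
      eq_univ_of_forall fun t => (distributionFunction_le m t).trans hMc, ofReal_measureReal]
  rw [min_eq_left hcM.le]
  obtain ⟨t₁, ht₁⟩ := ((tendsto_distributionFunction_atTop m).eventually (lt_mem_nhds hcM)).exists
  have hle : ∀ t ∈ S, t ≤ t₁ := fun t ht => le_of_not_gt fun h =>
    (ht₁.trans_le (monotone_distributionFunction m h.le)).not_ge ht
  have hbdd : BddAbove S := ⟨t₁, hle⟩
  rcases S.eq_empty_or_nonempty with hS | hS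
  · obtain rfl : c = 0 := hc.antisymm' <| le_of_not_gt fun hc0 => by
      obtain ⟨t, ht⟩ := ((tendsto_distributionFunction_atBot m).eventually (gt_mem_nhds hc0)).exists
      exact hS.subset (show t ∈ S from ht.le)
    rw [hS, measure_empty, ENNReal.ofReal_zero]
  have hs : sSup S ∈ S :=
    (isClosed_le (continuous_distributionFunction m) continuous_const).csSup_mem hS hbdd
  have hS_eq : S = Iic (sSup S) :=
    Subset.antisymm (fun t ht => le_csSup hbdd ht)
      (fun t ht => (monotone_distributionFunction m ht).trans hs)
  -- `G` attains `c` on `[sSup S, t₁]`, at a point of `S`, hence at `sSup S`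
  have hGs : G (sSup S) = c := by
    obtain ⟨u, hu, hGu⟩ := intermediate_value_Icc (hle _ hs)
      (continuous_distributionFunction m).continuousOn ⟨hs, ht₁.le⟩
    have : u ≤ sSup S := le_csSup hbdd (show u ∈ S from hGu.le)
    rwa [← le_antisymm this hu.1]
  rw [hS_eq, ← ofReal_measureReal, ← hGs]
  rfl

theorem map_distributionFunction :
    m.map (distributionFunction m) = volume.restrict (Icc 0 (m.real univ)) := by
  refine Measure.ext_of_Iic _ _ fun c => ?_
  rw [Measure.map_apply (continuous_distributionFunction m).measurable measurableSet_Iic,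
    Measure.restrict_apply measurableSet_Iic]
  rcases lt_or_ge c 0 with hc | hc
  · have h₁ : distributionFunction m ⁻¹' Iic c = ∅ := eq_empty_of_forall_notMem fun t ht =>
      (distributionFunction_nonneg m t).not_gt (lt_of_le_of_lt ht hc)
    have h₂ : Iic c ∩ Icc 0 (m.real univ) = ∅ := eq_empty_of_forall_notMem fun t ht =>
      (ht.1.trans_lt hc).not_ge ht.2.1
    rw [h₁, h₂, measure_empty, measure_empty]
  · have h₂ : Iic c ∩ Icc 0 (m.real univ) = Icc 0 (min c (m.real univ)) := by
      ext t; simp only [mem_inter_iff, mem_Iic, mem_Icc, le_min_iff]; tauto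
    rw [h₂, Real.volume_Icc, sub_zero]
    exact measure_distributionFunction_le m hc

end DistributionFunction

section Blocks

-- Blocks of parity `0` and `1` alternate, with gaps of length `ε²` that separate them but occupy
-- only a fraction `ε` of the line.
def block (j : ℕ) (ε : ℝ) (k : ℕ) : Set ℝ := Icc ((2 * k + j) * ε) ((2 * k + j + 1) * ε - ε ^ 2)

def blocks (j : ℕ) (ε : ℝ) : Set ℝ := ⋃ k, block j ε k

variable {j : ℕ} {ε : ℝ}

theorem measurableSet_blocks (j : ℕ) (ε : ℝ) : MeasurableSet (blocks j ε) :=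
  .iUnion fun _ => measurableSet_Icc

theorem blocks_subset_Ici (hε : 0 ≤ ε) : blocks j ε ⊆ Ici 0 :=
  iUnion_subset fun k _ hx => le_trans (by positivity) hx.1

theorem volume_real_block (hε : 0 ≤ ε) (hε₁ : ε ≤ 1) (k : ℕ) :
    volume.real (block j ε k) = ε - ε ^ 2 := by
  rw [block, Real.volume_real_Icc_of_le (by nlinarith)]
  ring

theorem pairwise_disjoint_block (hε : 0 < ε) :
    Pairwise (Function.onFun Disjoint (block j ε)) := by
  intro k k' hkk'
  refine disjoint_left.2 fun x hx hx' => ?_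
  rcases lt_or_gt_of_ne hkk' with h | h
  · have : (k : ℝ) + 1 ≤ k' := by exact_mod_cast h
    nlinarith [hx.2, hx'.1]
  · have : (k' : ℝ) + 1 ≤ k := by exact_mod_cast h
    nlinarith [hx'.2, hx.1]

theorem areSeparated_blocks (hε : 0 < ε) : Metric.AreSeparated (blocks 0 ε) (blocks 1 ε) := by
  refine ⟨ENNReal.ofReal (ε ^ 2), by simpa using hε.ne', fun u hu v hv => ?_⟩
  obtain ⟨_, ⟨k, rfl⟩, hu⟩ := hu
  obtain ⟨_, ⟨k', rfl⟩, hv⟩ := hv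
  rw [edist_dist, Real.dist_eq]
  refine ENNReal.ofReal_le_ofReal ?_
  simp only [block, mem_Icc, Nat.cast_zero, add_zero, Nat.cast_one] at hu hv
  rcases le_or_gt k k' with h | h
  · have : (k : ℝ) ≤ k' := Nat.cast_le.2 h
    rw [abs_sub_comm]
    exact le_abs.2 (Or.inl (by nlinarith))
  · have : (k' : ℝ) + 1 ≤ k := by exact_mod_cast h
    exact le_abs.2 (Or.inl (by nlinarith))

-- `[0, c]` contains the first `⌊c / 2ε⌋` blocks and meets at most one more
theorem measureReal_blocks_inter_Iic_mem (hj : j ≤ 1) (hε : 0 < ε) (hε₁ : ε ≤ 1) {c : ℝ}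
    (hc : 0 ≤ c) :
    volume.real (blocks j ε ∩ Iic c) ∈ Icc (c / 2 - c / 2 * ε - ε) (c / 2 + ε) := by
  set K := ⌊c / (2 * ε)⌋₊
  have hjr : (j : ℝ) ≤ 1 := by exact_mod_cast hj
  have hK₁ : c < (K + 1) * (2 * ε) := (div_lt_iff₀ (by positivity)).1 (Nat.lt_floor_add_one _)
  have hK₂ : K * (2 * ε) ≤ c := (le_div_iff₀ (by positivity)).1 (Nat.floor_le (by positivity))
  have hfull : ⋃ k ∈ Finset.range K, block j ε k ⊆ blocks j ε ∩ Iic c := by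
    simp only [iUnion_subset_iff, Finset.mem_range]
    intro k hk x hx
    have : (k : ℝ) + 1 ≤ K := by exact_mod_cast hk
    exact ⟨mem_iUnion.2 ⟨k, hx⟩, by simp only [mem_Iic]; nlinarith [hx.2]⟩
  have hcover : blocks j ε ∩ Iic c ⊆ ⋃ k ∈ Finset.range (K + 1), block j ε k := by
    rintro x ⟨hx, hxc⟩
    obtain ⟨k, hk⟩ := mem_iUnion.1 hx
    refine mem_biUnion (Finset.mem_range.2 (Nat.lt_succ_of_le (Nat.le_floor ?_))) hk
    rw [le_div_iff₀ (by positivity)]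
    nlinarith [hk.1, hxc.out]
  have hsum (K : ℕ) : ∑ k ∈ Finset.range K, volume.real (block j ε k) = K * (ε - ε ^ 2) := by
    rw [Finset.sum_congr rfl fun k _ => volume_real_block hε.le hε₁ k, Finset.sum_const,
      Finset.card_range, nsmul_eq_mul]
  constructor
  · calc c / 2 - c / 2 * ε - ε ≤ K * (ε - ε ^ 2) := by nlinarith
      _ = volume.real (⋃ k ∈ Finset.range K, block j ε k) := by
        rw [measureReal_biUnion_finset (fun k _ k' _ h => pairwise_disjoint_block hε h)
          (fun _ _ => measurableSet_Icc) (fun _ _ => measure_Icc_lt_top.ne), hsum]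
      _ ≤ volume.real (blocks j ε ∩ Iic c) :=
        measureReal_mono hfull ((measure_mono (t := Icc 0 c) fun x hx =>
          ⟨blocks_subset_Ici hε.le hx.1, hx.2⟩).trans_lt measure_Icc_lt_top).ne
  · calc volume.real (blocks j ε ∩ Iic c)
        ≤ volume.real (⋃ k ∈ Finset.range (K + 1), block j ε k) :=
          measureReal_mono hcover (measure_biUnion_lt_top (Finset.finite_toSet _)
            fun _ _ => measure_Icc_lt_top).ne
      _ ≤ ∑ k ∈ Finset.range (K + 1), volume.real (block j ε k) :=
          measureReal_biUnion_finset_le _ _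
      _ ≤ c / 2 + ε := by rw [hsum]; push_cast; nlinarith

theorem tendsto_measureReal_blocks_inter_Iic (hj : j ≤ 1) {ε : ℕ → ℝ} (hε : ∀ n, 0 < ε n)
    (hε₀ : Tendsto ε atTop (𝓝 0)) {c : ℝ} (hc : 0 ≤ c) :
    Tendsto (fun n => volume.real (blocks j (ε n) ∩ Iic c)) atTop (𝓝 (c / 2)) := by
  have hbounds : ∀ᶠ n in atTop, volume.real (blocks j (ε n) ∩ Iic c) ∈
      Icc (c / 2 - c / 2 * ε n - ε n) (c / 2 + ε n) := by
    filter_upwards [hε₀.eventually (ge_mem_nhds zero_lt_one)] with n hn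
    exact measureReal_blocks_inter_Iic_mem hj (hε n) hn hc
  refine tendsto_of_tendsto_of_tendsto_of_le_of_le' ?_ ?_ (hbounds.mono fun _ h => h.1)
    (hbounds.mono fun _ h => h.2)
  · simpa using ((hε₀.const_mul (c / 2)).const_sub (c / 2)).sub hε₀
  · simpa using hε₀.const_add (c / 2)

theorem tendsto_measureReal_restrict_blocks_inter_Iic (hj : j ≤ 1) {ε : ℕ → ℝ}
    (hε : ∀ n, 0 < ε n) (hε₀ : Tendsto ε atTop (𝓝 0)) {M : ℝ} (hM : 0 ≤ M) (c : ℝ) :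
    Tendsto (fun n => (volume.restrict (Icc 0 M)).real (blocks j (ε n) ∩ Iic c)) atTop
      (𝓝 (2⁻¹ * (volume.restrict (Icc 0 M)).real (Iic c))) := by
  have hblocks (n : ℕ) : blocks j (ε n) ∩ Iic c ∩ Icc 0 M = blocks j (ε n) ∩ Iic (min c M) := by
    ext x
    have := @blocks_subset_Ici j (ε n) (hε n).le x
    simp only [mem_inter_iff, mem_Iic, mem_Icc, le_min_iff, mem_Ici] at *
    tauto
  simp only [measureReal_restrict_apply ((measurableSet_blocks _ _).inter measurableSet_Iic),
    measureReal_restrict_apply measurableSet_Iic, hblocks]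
  rcases lt_or_ge c 0 with hc | hc
  · have h₁ (n : ℕ) : blocks j (ε n) ∩ Iic (min c M) = ∅ := eq_empty_of_forall_notMem fun x hx =>
      by linarith [(blocks_subset_Ici (hε n).le hx.1).out, hx.2.out, min_le_left c M]
    have h₂ : Iic c ∩ Icc 0 M = ∅ := eq_empty_of_forall_notMem fun x hx =>
      (hx.1.out.trans_lt hc).not_ge hx.2.1
    simp only [h₁, h₂, measureReal_empty, mul_zero]
    exact tendsto_const_nhds
  · have h₂ : Iic c ∩ Icc 0 M = Icc 0 (min c M) := by
      ext x
      simp only [mem_inter_iff, mem_Iic, mem_Icc, le_min_iff]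
      tauto
    rw [h₂, Real.volume_real_Icc_of_le (le_min hc hM), sub_zero, inv_mul_eq_div]
    exact tendsto_measureReal_blocks_inter_Iic hj hε hε₀ (le_min hc hM)

theorem hasAsymptoticDensity_blocks (hj : j ≤ 1) {ε : ℕ → ℝ} (hε : ∀ n, 0 < ε n)
    (hε₀ : Tendsto ε atTop (𝓝 0)) {M : ℝ} (hM : 0 ≤ M) :
    HasAsymptoticDensity (volume.restrict (Icc 0 M)) (fun n => blocks j (ε n)) 2⁻¹ := by
  have hbase := tendsto_measureReal_restrict_blocks_inter_Iic hj hε hε₀ hM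
  refine .of_isPiSystem (borel_eq_generateFrom_Iic ℝ) isPiSystem_Iic
    (fun n => measurableSet_blocks j (ε n)) ?_ (by rintro _ ⟨c, rfl⟩; exact hbase c)
  have hIic (s : Set ℝ) : (volume.restrict (Icc 0 M)).real (s ∩ Iic M) =
      (volume.restrict (Icc 0 M)).real s := by
    rw [measureReal_restrict_apply' measurableSet_Icc,
      measureReal_restrict_apply' measurableSet_Icc, inter_assoc,
      inter_eq_right.2 Icc_subset_Iic_self]
  have := hbase M
  rwa [funext fun n => hIic (blocks j (ε n)), ← univ_inter (Iic M), hIic] at this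

end Blocks

section Projection

variable {E : Type*} [NormedAddCommGroup E] [InnerProductSpace ℝ E] [FiniteDimensional ℝ E]
  [MeasurableSpace E] [BorelSpace E]

-- For `x ≠ y` the directions `ℓ ⊥ x - y` form a Haar-null hyperplane, so by Fubini a typical `ℓ`
-- separates `σ ⊗ σ`-almost every pair; a level set `S` then has `σ S ^ 2 = (σ ⊗ σ) (S ×ˢ S) = 0`.
theorem exists_forall_measure_inner_eq_zero (σ : Measure E) [SFinite σ] [NullSingletonClass σ] :
    ∃ ℓ : E, ∀ t : ℝ, σ {x | inner ℝ ℓ x = t} = 0 := by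
  have hdiag : ∀ᵐ z ∂σ.prod σ, z.1 ≠ z.2 :=
    (Measure.ae_prod_iff_ae_ae (measurableSet_eq_fun measurable_fst measurable_snd).compl).2
      (Eventually.of_forall fun x => σ.ae_ne x |>.mono fun _ h => Ne.symm h)
  have hgen : ∀ᵐ z ∂σ.prod σ, ∀ᵐ ℓ ∂(Measure.addHaar : Measure E),
      inner ℝ ℓ z.1 ≠ inner ℝ ℓ z.2 := by
    filter_upwards [hdiag] with z hz
    have hker : LinearMap.ker (innerₛₗ ℝ (z.1 - z.2)) ≠ ⊤ := fun h =>
      hz (sub_eq_zero.1 (inner_self_eq_zero.1 (by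
        simpa only [innerₛₗ_apply_apply, LinearMap.zero_apply] using
          LinearMap.congr_fun (LinearMap.ker_eq_top.1 h) (z.1 - z.2))))
    refine measure_mono_null (fun ℓ hℓ => ?_) (Measure.addHaar_submodule _ _ hker)
    simpa [inner_sub_left, real_inner_comm, sub_eq_zero] using not_not.1 hℓ
  obtain ⟨ℓ, hℓ⟩ := ((Measure.ae_ae_comm
    (measurableSet_eq_fun (by fun_prop) (by fun_prop)).compl).1 hgen).exists
  refine ⟨ℓ, fun t => ?_⟩
  have h : (σ.prod σ) ({x | inner ℝ ℓ x = t} ×ˢ {x | inner ℝ ℓ x = t}) = 0 :=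
    measure_mono_null (fun z hz => by simp_all) (ae_iff.1 hℓ)
  rwa [Measure.prod_prod, mul_self_eq_zero] at h

theorem exists_uniformContinuous_map_absolutelyContinuous_volume (σ : Measure E) [SFinite σ]
    [NullSingletonClass σ] :
    ∃ Φ : E → ℝ, UniformContinuous Φ ∧ ∃ M, 0 ≤ M ∧ σ.map Φ ≪ volume.restrict (Icc 0 M) := by
  obtain ⟨ℓ, hℓ⟩ := exists_forall_measure_inner_eq_zero σ
  have hL : UniformContinuous (innerSL ℝ ℓ) := (innerSL ℝ ℓ).uniformContinuous
  set m := σ.toFinite.map (innerSL ℝ ℓ)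
  have : NullSingletonClass m := ⟨fun t => by
    rw [Measure.map_apply hL.continuous.measurable (measurableSet_singleton t)]
    exact toFinite_absolutelyContinuous σ (hℓ t)⟩
  have hG := (continuous_distributionFunction m).measurable
  refine ⟨distributionFunction m ∘ innerSL ℝ ℓ, (uniformContinuous_distributionFunction m).comp hL,
    m.real univ, measureReal_nonneg, ?_⟩
  rw [← map_distributionFunction m, Measure.map_map hG hL.continuous.measurable]
  exact (absolutelyContinuous_toFinite σ).map (hG.comp hL.continuous.measurable)

end Projection

theorem Metric.AreSeparated.preimage {X Y : Type*} [PseudoEMetricSpace X] [PseudoEMetricSpace Y]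
    {s t : Set X} {f : Y → X} (hf : UniformContinuous f) (h : AreSeparated s t) :
    AreSeparated (f ⁻¹' s) (f ⁻¹' t) := by
  obtain ⟨r, hr, hst⟩ := h
  obtain ⟨δ, hδ, hfδ⟩ := EMetric.uniformContinuous_iff.1 hf r (pos_iff_ne_zero.2 hr)
  exact ⟨δ, hδ.ne', fun x hx y hy => le_of_not_gt fun hxy => (hst _ hx _ hy).not_gt (hfδ hxy)⟩

theorem Set.Finite.areSeparated {X : Type*} [EMetricSpace X] {s t : Set X} (hs : s.Finite)
    (ht : t.Finite) (hst : Disjoint s t) : Metric.AreSeparated s t := by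
  rw [← biUnion_of_singleton s, Metric.AreSeparated.finite_iUnion_left_iff hs]
  intro x hx
  rw [← biUnion_of_singleton t, Metric.AreSeparated.finite_iUnion_right_iff ht]
  intro y hy
  exact ⟨edist x y, (edist_pos.2 (hst.ne_of_mem hx hy)).ne', by simp⟩

theorem Metric.areSeparated_sdiff_thickening {X : Type*} [PseudoMetricSpace X] (s t : Set X)
    {r : ℝ} (hr : 0 < r) : AreSeparated (s \ thickening r t) t :=
  ⟨ENNReal.ofReal r, by simpa using hr, fun x hx y hy => le_of_not_gt fun h =>
    hx.2 ((mem_thickening_iff_exists_edist_lt _ _).2 ⟨y, hy, h⟩)⟩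

theorem Metric.AreSeparated.sdiff_thickening_union {X : Type*} [MetricSpace X] {s t S T : Set X}
    (hst : AreSeparated s t) {r : ℝ} (hr : 0 < r) (hS : S.Finite) (hT : T.Finite)
    (hST : Disjoint S T) :
    AreSeparated ((s \ thickening r (S ∪ T)) ∪ S) ((t \ thickening r (S ∪ T)) ∪ T) := by
  refine .union_left (.union_right ?_ ?_) (.union_right ?_ ?_)
  · exact hst.mono sdiff_subset sdiff_subset
  · exact (areSeparated_sdiff_thickening _ _ hr).mono_right subset_union_right
  · exact ((areSeparated_sdiff_thickening _ _ hr).mono_right subset_union_left).symm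
  · exact hS.areSeparated hT hST

theorem Metric.AreSeparated.exists_pos_le_dist {X : Type*} [PseudoMetricSpace X] {s t : Set X}
    (h : AreSeparated s t) : ∃ a > (0 : ℝ), ∀ x ∈ s, ∀ y ∈ t, a ≤ dist x y := by
  obtain ⟨r, hr, h⟩ := h
  refine ⟨(min r 1).toReal, toReal_pos (by simpa using hr) (by simp), fun x hx y hy => ?_⟩
  exact toReal_le_of_le_ofReal dist_nonneg
    (((min_le_left _ _).trans (h x hx y hy)).trans_eq (edist_dist x y))

theorem Set.Countable.exists_finite_eventually_mem {α : Type*} {s : Set α} (hs : s.Countable) :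
    ∃ S : ℕ → Set α, (∀ n, (S n).Finite ∧ S n ⊆ s) ∧ ∀ x ∈ s, ∀ᶠ n in atTop, x ∈ S n := by
  rcases s.eq_empty_or_nonempty with rfl | hne
  · exact ⟨fun _ => ∅, fun _ => ⟨finite_empty, subset_rfl⟩, fun x hx => hx.elim⟩
  obtain ⟨u, rfl⟩ := hs.exists_eq_range hne
  refine ⟨fun n => u '' Iio n, fun n => ⟨(finite_Iio n).image u, image_subset_range _ _⟩, ?_⟩
  rintro _ ⟨i, rfl⟩
  exact (eventually_gt_atTop i).mono fun n hn => mem_image_of_mem u hn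

theorem exists_pos_tendsto_measure_thickening {X : Type*} [MetricSpace X]
    [MeasurableSpace X] [OpensMeasurableSpace X] (κ : Measure X) [IsFiniteMeasure κ]
    [NullSingletonClass κ] {U : ℕ → Set X} (hU : ∀ n, (U n).Finite) :
    ∃ r : ℕ → ℝ, (∀ n, 0 < r n) ∧ Tendsto (fun n => κ (thickening (r n) (U n))) atTop (𝓝 0) := by
  have (n : ℕ) : ∃ r, 0 < r ∧ κ (thickening r (U n)) < (n : ℝ≥0∞)⁻¹ := by
    have h := tendsto_measure_thickening_of_isClosed (μ := κ) ⟨1, one_pos, measure_ne_top _ _⟩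
      (hU n).isClosed
    rw [(hU n).measure_zero] at h
    obtain ⟨r, hrκ, hr⟩ :=
      ((h.eventually (gt_mem_nhds (ENNReal.inv_pos.2 (natCast_ne_top n)))).and
        self_mem_nhdsWithin).exists
    exact ⟨r, hr, hrκ⟩
  choose r hr hrκ using this
  exact ⟨r, hr, tendsto_of_tendsto_of_tendsto_of_le_of_le tendsto_const_nhds
    ENNReal.tendsto_inv_nat_nhds_zero (fun _ => zero_le) fun n => (hrκ n).le⟩

theorem exists_areSeparated_isHalvingSequence {E : Type*} [NormedAddCommGroup E]
    [InnerProductSpace ℝ E] [FiniteDimensional ℝ E] [MeasurableSpace E] [BorelSpace E]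
    {μ ν : Measure E} [SigmaFinite μ] [SigmaFinite ν] (hna : ∀ x, μ {x} = 0 ∨ ν {x} = 0) :
    ∃ E₁ E₂ : ℕ → Set E, (∀ n, Metric.AreSeparated (E₁ n) (E₂ n)) ∧
      IsHalvingSequence μ E₁ ∧ IsHalvingSequence ν E₂ := by
  set σ := μ.restrict (atoms μ)ᶜ + ν.restrict (atoms ν)ᶜ
  have : NullSingletonClass σ := ⟨fun x => by simp [σ]⟩
  obtain ⟨Φ, hΦ, M, hM, hΦσ⟩ := exists_uniformContinuous_map_absolutelyContinuous_volume σ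
  have hΦm := hΦ.continuous.measurable
  set ε : ℕ → ℝ := fun n => 1 / (n + 1)
  have hε (n : ℕ) : 0 < ε n := Nat.one_div_pos_of_nat
  obtain ⟨SA, hSA, hSAcover⟩ := (countable_atoms μ).exists_finite_eventually_mem
  obtain ⟨SB, hSB, hSBcover⟩ := (countable_atoms ν).exists_finite_eventually_mem
  have : NullSingletonClass σ.toFinite :=
    ⟨fun x => toFinite_absolutelyContinuous σ (measure_singleton x)⟩
  obtain ⟨r, hr, hrσ⟩ := exists_pos_tendsto_measure_thickening σ.toFinite
    (U := fun n => SA n ∪ SB n) fun n => (hSA n).1.union (hSB n).1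
  have hside {ρ : Measure E} [SigmaFinite ρ] (hρ : ρ.restrict (atoms ρ)ᶜ ≤ σ) {j : ℕ}
      (hj : j ≤ 1) {S : ℕ → Set E} (hS : ∀ n, (S n).Finite ∧ S n ⊆ atoms ρ)
      (hcover : ∀ x ∈ atoms ρ, ∀ᶠ n in atTop, x ∈ S n) :
      IsHalvingSequence ρ fun n => (Φ ⁻¹' blocks j (ε n) \ thickening (r n) (SA n ∪ SB n)) ∪ S n :=
    .of_hasAsymptoticDensity ((hasAsymptoticDensity_blocks hj hε
        tendsto_one_div_add_atTop_nhds_zero_nat hM).preimage (fun n => measurableSet_blocks j _)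
        hΦm (((Measure.absolutelyContinuous_of_le hρ).map hΦm).trans hΦσ))
      (fun n => hΦm (measurableSet_blocks j _))
      ((Measure.absolutelyContinuous_of_le hρ).trans (absolutelyContinuous_toFinite σ))
      (fun n => isOpen_thickening.measurableSet) hrσ (fun n => (hS n).1.measurableSet)
      (fun n => (hS n).2) hcover
  have hdisj (n : ℕ) : Disjoint (SA n) (SB n) := disjoint_left.2 fun x hxA hxB =>
    (hna x).elim (fun h => ((hSA n).2 hxA).out.ne' h) (fun h => ((hSB n).2 hxB).out.ne' h)
  exact ⟨_, _, fun n => ((areSeparated_blocks (hε n)).preimage hΦ).sdiff_thickening_union (hr n)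
      (hSA n).1 (hSB n).1 (hdisj n),
    hside (Measure.le_add_right le_rfl) zero_le_one hSA hSAcover,
    hside (Measure.le_add_left le_rfl) le_rfl hSB hSBcover⟩

theorem separated_partition_two_measures_general
    {N : ℕ} (μ ν : Measure (Euc N))
    [IsLocallyFiniteMeasure μ]
    [IsLocallyFiniteMeasure ν]
    (hna : ∀ x : Euc N, μ {x} = 0 ∨ ν {x} = 0) :
    ∃ E₁ E₂ : ℕ → Set (Euc N),
      (∀ n, MeasurableSet (E₁ n) ∧ MeasurableSet (E₂ n)) ∧
      (∀ n, ∃ a > (0 : ℝ), ∀ x ∈ E₁ n, ∀ y ∈ E₂ n, a ≤ dist x y) ∧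
      (∀ f h : Euc N → ℂ, MemLp f 2 μ → MemLp h 2 μ →
        Tendsto
          (fun n => ∫ x, (E₁ n).indicator (halved μ f) x * (starRingEnd ℂ) (h x) ∂μ)
          atTop (𝓝 ((1 / 2 : ℂ) * ∫ x, f x * (starRingEnd ℂ) (h x) ∂μ))) ∧
      (∀ g h : Euc N → ℂ, MemLp g 2 ν → MemLp h 2 ν →
        Tendsto
          (fun n => ∫ x, (E₂ n).indicator (halved ν g) x * (starRingEnd ℂ) (h x) ∂ν)
          atTop (𝓝 ((1 / 2 : ℂ) * ∫ x, g x * (starRingEnd ℂ) (h x) ∂ν))) ∧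
      (∀ p : ℝ, 1 ≤ p →
        (∀ f : Euc N → ℂ, MemLp f (ENNReal.ofReal p) μ →
          Filter.limsup
            (fun n => (eLpNorm ((E₁ n).indicator (halved μ f)) (ENNReal.ofReal p) μ).toReal)
            atTop ≤ (2 : ℝ) ^ (-(1 / p)) * (eLpNorm f (ENNReal.ofReal p) μ).toReal) ∧
        (∀ g : Euc N → ℂ, MemLp g (ENNReal.ofReal p) ν →
          Filter.limsup
            (fun n => (eLpNorm ((E₂ n).indicator (halved ν g)) (ENNReal.ofReal p) ν).toReal)
            atTop ≤ (2 : ℝ) ^ (-(1 / p)) * (eLpNorm g (ENNReal.ofReal p) ν).toReal)) := by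
  obtain ⟨E₁, E₂, hsep, h₁, h₂⟩ := exists_areSeparated_isHalvingSequence hna
  exact ⟨E₁, E₂, fun n => ⟨h₁.measurableSet n, h₂.measurableSet n⟩,
    fun n => (hsep n).exists_pos_le_dist,
    fun _ _ => h₁.tendsto_integral_indicator_halved_mul_conj,
    fun _ _ => h₂.tendsto_integral_indicator_halved_mul_conj,
    fun _ hp => ⟨fun _ => h₁.limsup_eLpNorm_indicator_halved_le hp,
      fun _ => h₂.limsup_eLpNorm_indicator_halved_le hp⟩⟩

/-- separated partitions of unity for two Radon measures without
common atoms. -/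
theorem separated_partition_two_measures
    {N : ℕ} (μ ν : Measure (Euc N))
    [IsLocallyFiniteMeasure μ] [μ.InnerRegular]
    [IsLocallyFiniteMeasure ν] [ν.InnerRegular]
    (hna : ∀ x : Euc N, μ {x} = 0 ∨ ν {x} = 0) :
    ∃ E₁ E₂ : ℕ → Set (Euc N),
      (∀ n, MeasurableSet (E₁ n) ∧ MeasurableSet (E₂ n)) ∧
      (∀ n, ∃ a > (0 : ℝ), ∀ x ∈ E₁ n, ∀ y ∈ E₂ n, a ≤ dist x y) ∧
      (∀ f h : Euc N → ℂ, MemLp f 2 μ → MemLp h 2 μ →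
        Tendsto
          (fun n => ∫ x, (E₁ n).indicator (halved μ f) x * (starRingEnd ℂ) (h x) ∂μ)
          atTop (𝓝 ((1 / 2 : ℂ) * ∫ x, f x * (starRingEnd ℂ) (h x) ∂μ))) ∧
      (∀ g h : Euc N → ℂ, MemLp g 2 ν → MemLp h 2 ν →
        Tendsto
          (fun n => ∫ x, (E₂ n).indicator (halved ν g) x * (starRingEnd ℂ) (h x) ∂ν)
          atTop (𝓝 ((1 / 2 : ℂ) * ∫ x, g x * (starRingEnd ℂ) (h x) ∂ν))) ∧
      (∀ p : ℝ, 1 ≤ p →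
        (∀ f : Euc N → ℂ, MemLp f (ENNReal.ofReal p) μ →
          Filter.limsup
            (fun n => (eLpNorm ((E₁ n).indicator (halved μ f)) (ENNReal.ofReal p) μ).toReal)
            atTop ≤ (2 : ℝ) ^ (-(1 / p)) * (eLpNorm f (ENNReal.ofReal p) μ).toReal) ∧
        (∀ g : Euc N → ℂ, MemLp g (ENNReal.ofReal p) ν →
          Filter.limsup
            (fun n => (eLpNorm ((E₂ n).indicator (halved ν g)) (ENNReal.ofReal p) ν).toReal)
            atTop ≤ (2 : ℝ) ^ (-(1 / p)) * (eLpNorm g (ENNReal.ofReal p) ν).toReal)) :=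
  separated_partition_two_measures_general μ ν hna
end
end
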